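/- arXiv:2502.06912 — 2 statements merged into one kernel-verified Lean document; each statement's English description precedes it below -/
import Mathlib

section
/- A finite dismantlable lattice with n elements has exactly n + r − 2 covering edges if and only if it is an adjunct of r chains. -/
/-- A subset of a lattice closed under meets and joins (a sublattice). -/
def IsSublatticeSet {α : Type*} [Lattice α] (s : Set α) : Prop :=
  ∀ x ∈ s, ∀ y ∈ s, x ⊓ y ∈ s ∧ x ⊔ y ∈ s

/-- A finite lattice of order `n` is dismantlable if there is a chain
`L₁ ⊂ L₂ ⊂ ⋯ ⊂ Lₙ = L` of sublattices with `|Lᵢ| = i`. -/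
def Dismantlable (α : Type*) [Lattice α] [Fintype α] : Prop :=
  ∃ f : ℕ → Set α,
    (∀ i, 1 ≤ i → i ≤ Fintype.card α → (f i).ncard = i ∧ IsSublatticeSet (f i)) ∧
    (∀ i, 1 ≤ i → i < Fintype.card α → f i ⊆ f (i + 1)) ∧
    f (Fintype.card α) = Set.univ

/-- `AdjunctRep C₀ s l` : the subset `s`, with the order induced from the ambient
lattice, is an adjunct of chains starting with the chain `C₀`; the list `l` records, in
order, the adjoined chains together with their adjunct pairs, i.e.
`s = C₀ ]^{b₁}_{a₁} C₁ ]^{b₂}_{a₂} C₂ ⋯ ]^{b_k}_{a_k} C_k` with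
`l = [(C₁,a₁,b₁), …, (C_k,a_k,b_k)]`.  In the step, the adjunct pair `(a,b)` lies in
the part `s` built so far, with `a < b` and `a` not covered by `b` in `s`, and the
ambient order on `s ∪ c` is exactly the adjunct order: for `x ∈ s` and `y ∈ c`,
`x ≤ y ↔ x ≤ a` and `y ≤ x ↔ b ≤ x`. -/
inductive AdjunctRep {α : Type*} [Lattice α] (C₀ : Set α) :
    Set α → List (Set α × α × α) → Prop
  | base (hchain : IsChain (· ≤ ·) C₀) (hne : C₀.Nonempty) : AdjunctRep C₀ C₀ []
  | step {s : Set α} {l : List (Set α × α × α)} (c : Set α) (a b : α)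
      (hs : AdjunctRep C₀ s l) (hc : IsChain (· ≤ ·) c) (hcne : c.Nonempty)
      (hdisj : Disjoint s c) (ha : a ∈ s) (hb : b ∈ s) (hab : a < b)
      (hnotcov : ∃ z ∈ s, a < z ∧ z < b)
      (hord : ∀ x ∈ s, ∀ y ∈ c, (x ≤ y ↔ x ≤ a) ∧ (y ≤ x ↔ b ≤ x)) :
      AdjunctRep C₀ (s ∪ c) (l ++ [(c, a, b)])

/-!
An adjunct step `L ]ᵇₐ C` keeps every covering edge of `L` (because `a` is not covered by `b`),
adds the `|C| - 1` edges of the chain `C`, and adds the two edges `a ⋖ min C` and `max C ⋖ b`.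
Starting from a chain, which has one edge fewer than elements, an adjunct of `r` chains on `n`
elements therefore has `n + r - 2` edges.

Conversely, a dismantlable lattice is built from a point by adding one element `x` at a time to a
sublattice `s`. Either `x` is a new bottom or top of `s`, and it extends the first chain; or it sits
between the largest `d ∈ s` below it and the least `u ∈ s` above it. If `d ⋖ u` in `s`, this edge
belongs to one of the chains and `x` is inserted into that chain; otherwise `{x}` is adjoined as a
new chain at `(d, u)`. So every finite dismantlable lattice is an adjunct of chains, and the edge
count determines how many.
-/

open Set

section PartialOrder

variable {α : Type*} [PartialOrder α] {s t c : Set α} {a b d u m x y M p q : α}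

structure CovByIn (s : Set α) (a b : α) : Prop where
  left_mem : a ∈ s
  right_mem : b ∈ s
  lt : a < b
  not_lt : ∀ z ∈ s, a < z → ¬z < b

def edgesIn (s : Set α) : Set (α × α) := {p | CovByIn s p.1 p.2}

lemma covByIn_univ : CovByIn univ a b ↔ a ⋖ b :=
  ⟨fun h => ⟨h.lt, fun z => h.not_lt z trivial⟩,
    fun h => ⟨trivial, trivial, h.lt, fun _ _ => @h.2 _⟩⟩

lemma edgesIn_subset_prod (s : Set α) : edgesIn s ⊆ s ×ˢ s :=
  fun _ h => ⟨h.left_mem, h.right_mem⟩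

lemma CovByIn.of_subset (h : CovByIn t a b) (hst : s ⊆ t) (ha : a ∈ s) (hb : b ∈ s) :
    CovByIn s a b :=
  ⟨ha, hb, h.lt, fun z hz => h.not_lt z (hst hz)⟩

lemma CovByIn.eq_or_eq (h : CovByIn s a b) (hy : y ∈ s) (hay : a ≤ y) (hyb : y ≤ b) :
    y = a ∨ y = b := by
  rcases hay.eq_or_lt with rfl | hay
  · exact .inl rfl
  rcases hyb.eq_or_lt with rfl | hyb
  · exact .inr rfl
  exact (h.not_lt y hy hay hyb).elim

lemma CovByIn.le_or_le (h : CovByIn s d u) (hy : y ∈ s) (hyd : y ≤ d ∨ d ≤ y)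
    (hyu : y ≤ u ∨ u ≤ y) : y ≤ d ∨ u ≤ y := by
  rcases hyd with hyd | hdy
  · exact .inl hyd
  rcases hyu with hyu | huy
  · rcases h.eq_or_eq hy hdy hyu with rfl | rfl <;> simp
  · exact .inr huy

lemma exists_covByIn_of_lt (hs : s.Finite) (ha : a ∈ s) (hb : b ∈ s) (hab : a < b) :
    ∃ z, CovByIn s a z := by
  obtain ⟨z, hz⟩ := (hs.subset fun _ hw => hw.1 : {w | w ∈ s ∧ a < w}.Finite).exists_minimal
    ⟨b, hb, hab⟩
  exact ⟨z, ha, hz.1.1, hz.1.2, fun w hw haw hwz => hwz.not_ge (hz.le_of_le ⟨hw, haw⟩ hwz.le)⟩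

lemma IsChain.exists_isGreatest (hc : IsChain (· ≤ ·) c) (hfin : c.Finite) (hne : c.Nonempty) :
    ∃ g, IsGreatest c g := by
  obtain ⟨g, hg⟩ := hfin.exists_maximal hne
  exact ⟨g, hg.1, fun y hy => (hc.total hy hg.1).elim id (hg.le_of_ge hy)⟩

lemma IsChain.exists_isLeast (hc : IsChain (· ≤ ·) c) (hfin : c.Finite) (hne : c.Nonempty) :
    ∃ g, IsLeast c g := by
  obtain ⟨g, hg⟩ := hfin.exists_minimal hne
  exact ⟨g, hg.1, fun y hy => (hc.total hg.1 hy).elim id (hg.le_of_le hy)⟩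

lemma IsChain.ncard_edgesIn_add_one [Finite α] (hc : IsChain (· ≤ ·) c) (hne : c.Nonempty) :
    (edgesIn c).ncard + 1 = c.ncard := by
  obtain ⟨M, hM⟩ := hc.exists_isGreatest (toFinite c) hne
  have himage : Prod.fst '' edgesIn c = c \ {M} := by
    ext p
    constructor
    · rintro ⟨⟨p, q⟩, h, rfl⟩
      exact ⟨h.left_mem, fun hpM => (h.lt.trans_le (hM.2 h.right_mem)).ne hpM⟩
    · rintro ⟨hp, hpM⟩
      obtain ⟨q, hq⟩ := exists_covByIn_of_lt (toFinite c) hp hM.1 ((hM.2 hp).lt_of_ne hpM)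
      exact ⟨(p, q), hq, rfl⟩
  have hinj : InjOn Prod.fst (edgesIn c) := by
    have key : ∀ p q q', CovByIn c p q → CovByIn c p q' → q ≤ q' → q = q' := fun p q q' h h' hle =>
      (h'.eq_or_eq h.right_mem h.lt.le hle).resolve_left h.lt.ne'
    rintro ⟨p, q⟩ h ⟨p', q'⟩ h' (rfl : p = p')
    rcases hc.total h.right_mem h'.right_mem with hle | hle
    · rw [key p q q' h h' hle]
    · rw [key p q' q h' h hle]
  rw [← hinj.ncard_image, himage, ncard_sdiff_singleton_add_one hM.1]

/-- The position of the elements of a chain adjoined to `s` at `(a, b)`, as in `hord` of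
`AdjunctRep.step`. -/
def LiesBetween (s : Set α) (a b y : α) : Prop :=
  ∀ z ∈ s, (z ≤ y ↔ z ≤ a) ∧ (y ≤ z ↔ b ≤ z)

lemma LiesBetween.left_lt (h : LiesBetween s a b y) (ha : a ∈ s) (hy : y ∉ s) : a < y :=
  ((h a ha).1.2 le_rfl).lt_of_ne fun e => hy (e ▸ ha)

lemma LiesBetween.lt_right (h : LiesBetween s a b y) (hb : b ∈ s) (hy : y ∉ s) : y < b :=
  ((h b hb).2.2 le_rfl).lt_of_ne fun e => hy (e ▸ hb)

lemma LiesBetween.eq_left_of_covByIn (h : LiesBetween s a b y) (ha : a ∈ s) (hy : y ∉ s)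
    (hd : d ∈ s) (hcov : CovByIn t d y) (hat : a ∈ t) : d = a :=
  ((hcov.eq_or_eq hat ((h d hd).1.1 hcov.lt.le) (h.left_lt ha hy).le).resolve_right
    (h.left_lt ha hy).ne).symm

lemma LiesBetween.eq_right_of_covByIn (h : LiesBetween s a b y) (hb : b ∈ s) (hy : y ∉ s)
    (hu : u ∈ s) (hcov : CovByIn t y u) (hbt : b ∈ t) : u = b :=
  ((hcov.eq_or_eq hbt (h.lt_right hb hy).le ((h u hu).2.1 hcov.lt.le)).resolve_left
    (h.lt_right hb hy).ne').symm

lemma LiesBetween.insert_of_extremal (hy : LiesBetween s a b y)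
    (hx : (∀ z ∈ t, x < z) ∨ ∀ z ∈ t, z < x) (hyt : y ∈ t) (hat : a ∈ t) (hbt : b ∈ t) :
    LiesBetween (insert x s) a b y := by
  refine forall_mem_insert.2 ⟨?_, hy⟩
  rcases hx with hx | hx
  · exact ⟨iff_of_true (hx y hyt).le (hx a hat).le,
      iff_of_false (hx y hyt).not_ge (hx b hbt).not_ge⟩
  · exact ⟨iff_of_false (hx y hyt).not_ge (hx a hat).not_ge,
      iff_of_true (hx y hyt).le (hx b hbt).le⟩

lemma LiesBetween.insert (hy : LiesBetween s a b y) (hx : LiesBetween t d u x) (hyt : y ∈ t)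
    (hat : a ∈ t) (hbt : b ∈ t) (hd : d ∈ s) (hu : u ∈ s) :
    LiesBetween (insert x s) a b y :=
  forall_mem_insert.2
    ⟨⟨(hx y hyt).2.trans ((hy u hu).1.trans (hx a hat).2.symm),
      (hx y hyt).1.trans ((hy d hd).2.trans (hx b hbt).1.symm)⟩, hy⟩

lemma liesBetween_of_isGreatest_of_isLeast (hd : IsGreatest (s ∩ Iic x) d)
    (hu : IsLeast (s ∩ Ici x) u) : LiesBetween s d u x := fun _ hz =>
  ⟨⟨fun h => hd.2 ⟨hz, h⟩, fun h => h.trans hd.1.2⟩, ⟨fun h => hu.2 ⟨hz, h⟩, hu.1.2.trans⟩⟩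

lemma IsChain.insert_between (hc : IsChain (· ≤ ·) c) (hy : ∀ y ∈ c, y ≤ d ∨ u ≤ y)
    (hdx : d ≤ x) (hxu : x ≤ u) : IsChain (· ≤ ·) (insert x c) :=
  hc.insert fun y hy' _ =>
    (hy y hy').elim (fun h => .inr (h.trans hdx)) (fun h => .inl (hxu.trans h))

lemma covByIn_union_iff_of_mem_left (hnotcov : ∃ z ∈ s, a < z ∧ z < b)
    (hord : ∀ y ∈ c, LiesBetween s a b y) (hp : p ∈ s) (hq : q ∈ s) : CovByIn (s ∪ c) p q ↔ CovByIn s p q := by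
  refine ⟨fun h => h.of_subset subset_union_left hp hq, fun h => ⟨.inl hp, .inl hq, h.lt, ?_⟩⟩
  rintro z (hz | hz) hpz hzq
  · exact h.not_lt z hz hpz hzq
  · obtain ⟨w, hw, haw, hwb⟩ := hnotcov
    exact h.not_lt w hw (((hord z hz p hp).1.1 hpz.le).trans_lt haw)
      (hwb.trans_le ((hord z hz q hq).2.1 hzq.le))

lemma covByIn_union_iff_of_mem_right (hab : a < b) (hord : ∀ y ∈ c, LiesBetween s a b y)
    (hp : p ∈ c) (hq : q ∈ c) : CovByIn (s ∪ c) p q ↔ CovByIn c p q := by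
  refine ⟨fun h => h.of_subset subset_union_right hp hq, fun h => ⟨.inr hp, .inr hq, h.lt, ?_⟩⟩
  rintro z (hz | hz) hpz hzq
  · exact hab.not_ge (((hord p hp z hz).2.1 hpz.le).trans ((hord q hq z hz).1.1 hzq.le))
  · exact h.not_lt z hz hpz hzq

lemma covByIn_union_iff_of_mem_left_of_mem_right (hdisj : Disjoint s c) (ha : a ∈ s)
    (hord : ∀ y ∈ c, LiesBetween s a b y) (hm : IsLeast c m) (hp : p ∈ s) (hq : q ∈ c) :
    CovByIn (s ∪ c) p q ↔ p = a ∧ q = m := by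
  have hm_lt : a < m := (hord m hm.1).left_lt ha (disjoint_right.1 hdisj hm.1)
  constructor
  · intro h
    obtain rfl := (hord q hq).eq_left_of_covByIn ha (disjoint_right.1 hdisj hq) hp h (.inl ha)
    refine ⟨rfl, ?_⟩
    rcases h.eq_or_eq (.inr hm.1) hm_lt.le (hm.2 hq) with hmp | hmq
    · exact (hdisj.ne_of_mem hp hm.1 hmp.symm).elim
    · exact hmq.symm
  · rintro ⟨rfl, rfl⟩
    refine ⟨.inl ha, .inr hm.1, hm_lt, ?_⟩
    rintro z (hz | hz) hpz hzq
    · exact hpz.not_ge ((hord q hm.1 z hz).1.1 hzq.le)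
    · exact hzq.not_ge (hm.2 hz)

lemma covByIn_union_iff_of_mem_right_of_mem_left (hdisj : Disjoint s c) (hb : b ∈ s)
    (hord : ∀ y ∈ c, LiesBetween s a b y) (hM : IsGreatest c M) (hp : p ∈ c) (hq : q ∈ s) :
    CovByIn (s ∪ c) p q ↔ p = M ∧ q = b := by
  have hM_lt : M < b := (hord M hM.1).lt_right hb (disjoint_right.1 hdisj hM.1)
  constructor
  · intro h
    obtain rfl := (hord p hp).eq_right_of_covByIn hb (disjoint_right.1 hdisj hp) hq h (.inl hb)
    refine ⟨?_, rfl⟩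
    rcases h.eq_or_eq (.inr hM.1) (hM.2 hp) hM_lt.le with hMp | hMq
    · exact hMp.symm
    · exact (hdisj.ne_of_mem hq hM.1 hMq.symm).elim
  · rintro ⟨rfl, rfl⟩
    refine ⟨.inr hM.1, .inl hb, hM_lt, ?_⟩
    rintro z (hz | hz) hpz hzq
    · exact hzq.not_ge ((hord p hM.1 z hz).2.1 hpz.le)
    · exact hpz.not_ge (hM.2 hz)

lemma edgesIn_union_of_liesBetween (hdisj : Disjoint s c) (ha : a ∈ s) (hb : b ∈ s)
    (hnotcov : ∃ z ∈ s, a < z ∧ z < b) (hord : ∀ y ∈ c, LiesBetween s a b y) (hm : IsLeast c m)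
    (hM : IsGreatest c M) :
    edgesIn (s ∪ c) = edgesIn s ∪ edgesIn c ∪ {(a, m), (M, b)} := by
  have hab : a < b := let ⟨_, _, haz, hzb⟩ := hnotcov; haz.trans hzb
  ext ⟨p, q⟩
  simp only [edgesIn, mem_union, mem_insert_iff, mem_singleton_iff, mem_ofPred_eq, Prod.mk.injEq]
  constructor
  · intro h
    rcases h.left_mem with hp | hp <;> rcases h.right_mem with hq | hq
    · exact .inl (.inl ((covByIn_union_iff_of_mem_left hnotcov hord hp hq).1 h))
    · exact .inr (.inl ((covByIn_union_iff_of_mem_left_of_mem_right hdisj ha hord hm hp hq).1 h))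
    · exact .inr (.inr ((covByIn_union_iff_of_mem_right_of_mem_left hdisj hb hord hM hp hq).1 h))
    · exact .inl (.inr ((covByIn_union_iff_of_mem_right hab hord hp hq).1 h))
  · rintro ((h | h) | h | h)
    · exact (covByIn_union_iff_of_mem_left hnotcov hord h.left_mem h.right_mem).2 h
    · exact (covByIn_union_iff_of_mem_right hab hord h.left_mem h.right_mem).2 h
    · obtain ⟨rfl, rfl⟩ := h
      exact (covByIn_union_iff_of_mem_left_of_mem_right hdisj ha hord hm ha hm.1).2 ⟨rfl, rfl⟩
    · obtain ⟨rfl, rfl⟩ := h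
      exact (covByIn_union_iff_of_mem_right_of_mem_left hdisj hb hord hM hM.1 hb).2 ⟨rfl, rfl⟩

lemma ncard_edgesIn_union_of_liesBetween [Finite α] (hdisj : Disjoint s c) (ha : a ∈ s)
    (hb : b ∈ s) (hnotcov : ∃ z ∈ s, a < z ∧ z < b) (hord : ∀ y ∈ c, LiesBetween s a b y)
    (hm : IsLeast c m) (hM : IsGreatest c M) :
    (edgesIn (s ∪ c)).ncard = (edgesIn s).ncard + (edgesIn c).ncard + 2 := by
  have hold : Disjoint (edgesIn s) (edgesIn c) :=
    (disjoint_prod.2 (.inl hdisj)).mono (edgesIn_subset_prod s) (edgesIn_subset_prod c)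
  have hnew : Disjoint (edgesIn s ∪ edgesIn c) {(a, m), (M, b)} := by
    refine disjoint_insert_right.2 ⟨?_, disjoint_singleton_right.2 ?_⟩
    · rintro (h | h)
      exacts [hdisj.ne_of_mem h.right_mem hm.1 rfl, hdisj.ne_of_mem ha h.left_mem rfl]
    · rintro (h | h)
      exacts [hdisj.ne_of_mem h.left_mem hM.1 rfl, hdisj.ne_of_mem hb h.right_mem rfl]
  have hne : ((a, m) : α × α) ≠ (M, b) := fun h => hdisj.ne_of_mem ha hM.1 (congrArg Prod.fst h)
  rw [edgesIn_union_of_liesBetween hdisj ha hb hnotcov hord hm hM, ncard_union_eq hnew,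
    ncard_union_eq hold, ncard_pair hne]

end PartialOrder

section Lattice

variable {α : Type*} [Lattice α] {C₀ s c : Set α} {l : List (Set α × α × α)} {a b d u x : α}

lemma IsSublatticeSet.isSublattice (h : IsSublatticeSet s) : IsSublattice s :=
  ⟨fun _ ha _ hb => (h _ ha _ hb).2, fun _ ha _ hb => (h _ ha _ hb).1⟩

lemma SupClosed.exists_isGreatest (hs : SupClosed s) (hfin : s.Finite) (hne : s.Nonempty) :
    ∃ g, IsGreatest s g := by
  obtain ⟨g, hg⟩ := hfin.exists_maximal hne
  exact ⟨g, hg.1, fun y hy => sup_eq_right.1 (hg.eq_of_ge (hs hy hg.1) le_sup_right)⟩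

lemma InfClosed.exists_isLeast (hs : InfClosed s) (hfin : s.Finite) (hne : s.Nonempty) :
    ∃ g, IsLeast s g := by
  obtain ⟨g, hg⟩ := hfin.exists_minimal hne
  exact ⟨g, hg.1, fun y hy => inf_eq_right.1 (hg.eq_of_le (hs hy hg.1) inf_le_right)⟩

lemma forall_lt_of_infClosed_insert (ht : InfClosed (insert x s)) (h : ∀ y ∈ s, ¬y ≤ x) :
    ∀ y ∈ s, x < y := by
  intro y hy
  rcases ht (mem_insert x s) (mem_insert_of_mem x hy) with hxy | hxy
  · exact (inf_eq_left.1 hxy).lt_of_ne fun e => h y hy e.ge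
  · exact (h _ hxy inf_le_left).elim

lemma forall_lt_of_supClosed_insert (ht : SupClosed (insert x s)) (h : ∀ y ∈ s, ¬x ≤ y) :
    ∀ y ∈ s, y < x := by
  intro y hy
  rcases ht (mem_insert x s) (mem_insert_of_mem x hy) with hxy | hxy
  · exact (sup_eq_left.1 hxy).lt_of_ne fun e => h y hy e.ge
  · exact (h _ hxy le_sup_left).elim

namespace AdjunctRep

theorem ncard_edgesIn_add_one [Finite α] (h : AdjunctRep C₀ s l) :
    (edgesIn s).ncard + 1 = s.ncard + l.length := by
  induction h with
  | base hchain hne => simpa using hchain.ncard_edgesIn_add_one hne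
  | @step s l c a b _ hc hcne hdisj ha hb _ hnotcov hord ih =>
    obtain ⟨m, hm⟩ := hc.exists_isLeast (toFinite c) hcne
    obtain ⟨M, hM⟩ := hc.exists_isGreatest (toFinite c) hcne
    have hchain := hc.ncard_edgesIn_add_one hcne
    rw [ncard_edgesIn_union_of_liesBetween hdisj ha hb hnotcov (fun y hy z hz => hord z hz y hy)
      hm hM, ncard_union_eq hdisj, List.length_append, List.length_singleton]
    omega

theorem insert_union (h : AdjunctRep C₀ (insert x s) l) (hc : IsChain (· ≤ ·) c)
    (hcne : c.Nonempty) (hdisj : Disjoint s c) (hxc : x ∉ c) (ha : a ∈ s) (hb : b ∈ s)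
    (hab : a < b) (hnotcov : ∃ z ∈ s, a < z ∧ z < b)
    (hord : ∀ y ∈ c, LiesBetween (insert x s) a b y) :
    AdjunctRep C₀ (insert x (s ∪ c)) (l ++ [(c, a, b)]) := by
  rw [← Set.insert_union]
  obtain ⟨z, hz, haz, hzb⟩ := hnotcov
  exact .step c a b h hc hcne (disjoint_insert_left.2 ⟨hxc, hdisj⟩) (mem_insert_of_mem x ha)
    (mem_insert_of_mem x hb) hab ⟨z, mem_insert_of_mem x hz, haz, hzb⟩
    fun z hz y hy => hord y hy z hz

theorem insert_of_extremal (h : AdjunctRep C₀ s l) (hx : (∀ y ∈ s, x < y) ∨ ∀ y ∈ s, y < x) :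
    AdjunctRep (insert x C₀) (insert x s) l := by
  induction h with
  | base hchain hne =>
    refine .base (hchain.insert fun y hy _ => ?_) (hne.mono (subset_insert x C₀))
    exact hx.imp (fun h => (h y hy).le) (fun h => (h y hy).le)
  | @step s l c a b _ hc hcne hdisj ha hb hab hnotcov hord ih =>
    have hxc : x ∉ c := fun hxc => by rcases hx with h | h <;> exact lt_irrefl x (h x (.inr hxc))
    refine (ih (hx.imp (fun h y hy => h y (.inl hy)) (fun h y hy => h y (.inl hy)))).insert_union
      hc hcne hdisj hxc ha hb hab hnotcov fun y hy => ?_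
    exact LiesBetween.insert_of_extremal (fun z hz => hord z hz y hy) hx (.inr hy) (.inl ha)
      (.inl hb)

/-- If the edge `d ⋖ u` on which `x` sits touches the last chain `c`, then `x` can join `c`. -/
theorem step_insert (h : AdjunctRep C₀ s l) (hc : IsChain (· ≤ ·) c) (hdisj : Disjoint s c)
    (ha : a ∈ s) (hb : b ∈ s) (hab : a < b) (hnotcov : ∃ z ∈ s, a < z ∧ z < b)
    (hord : ∀ y ∈ c, LiesBetween s a b y) (hcov : CovByIn (s ∪ c) d u) (hd : d ∈ c ∨ d = a)
    (hu : u ∈ c ∨ u = b) (hx : LiesBetween (s ∪ c) d u x) (hxs : x ∉ s ∪ c) :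
    AdjunctRep C₀ (insert x (s ∪ c)) (l ++ [(insert x c, a, b)]) := by
  have hcd : ∀ y ∈ c, y ≤ d ∨ d ≤ y := by
    rcases hd with hd | rfl
    exacts [fun y hy => hc.total hy hd, fun y hy => .inr ((hord y hy d ha).1.2 le_rfl)]
  have hcu : ∀ y ∈ c, y ≤ u ∨ u ≤ y := by
    rcases hu with hu | rfl
    exacts [fun y hy => hc.total hy hu, fun y hy => .inl ((hord y hy u hb).2.2 le_rfl)]
  have hsd : ∀ z ∈ s, z ≤ d ↔ z ≤ a := by
    rcases hd with hd | rfl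
    exacts [fun z hz => (hord d hd z hz).1, fun _ _ => Iff.rfl]
  have hsu : ∀ z ∈ s, u ≤ z ↔ b ≤ z := by
    rcases hu with hu | rfl
    exacts [fun z hz => (hord u hu z hz).2, fun _ _ => Iff.rfl]
  have hchain : IsChain (· ≤ ·) (insert x c) :=
    hc.insert_between (fun y hy => hcov.le_or_le (.inr hy) (hcd y hy) (hcu y hy))
      ((hx d hcov.left_mem).1.2 le_rfl) ((hx u hcov.right_mem).2.2 le_rfl)
  rw [← union_insert]
  refine .step (insert x c) a b h hchain (insert_nonempty x c)
    (disjoint_insert_right.2 ⟨fun hxs' => hxs (.inl hxs'), hdisj⟩) ha hb hab hnotcov ?_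
  rintro z hz y (rfl | hy)
  · exact ⟨(hx z (.inl hz)).1.trans (hsd z hz), (hx z (.inl hz)).2.trans (hsu z hz)⟩
  · exact hord y hy z hz

theorem exists_insert_of_covByIn (h : AdjunctRep C₀ s l) (hcov : CovByIn s d u)
    (hx : LiesBetween s d u x) (hxs : x ∉ s) :
    ∃ C₀' l', AdjunctRep C₀' (insert x s) l' := by
  induction h with
  | base hchain hne =>
    refine ⟨insert x C₀, [], .base ?_ (hne.mono (subset_insert x C₀))⟩
    exact hchain.insert_between
      (fun y hy => hcov.le_or_le hy (hchain.total hy hcov.left_mem)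
        (hchain.total hy hcov.right_mem))
      ((hx d hcov.left_mem).1.2 le_rfl) ((hx u hcov.right_mem).2.2 le_rfl)
  | @step s l c a b hs hc hcne hdisj ha hb hab hnotcov hord ih =>
    have hord' : ∀ y ∈ c, LiesBetween s a b y := fun y hy z hz => hord z hz y hy
    have hcs : ∀ y ∈ c, y ∉ s := fun y hy hys => disjoint_right.1 hdisj hy hys
    rcases hcov.left_mem with hd | hd <;> rcases hcov.right_mem with hu | hu
    · obtain ⟨C₀', l', h'⟩ := ih (hcov.of_subset subset_union_left hd hu)
        (fun z hz => hx z (.inl hz)) (fun hxs' => hxs (.inl hxs'))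
      exact ⟨C₀', _, h'.insert_union hc hcne hdisj (fun hxc => hxs (.inr hxc)) ha hb hab hnotcov
        fun y hy => (hord' y hy).insert hx (.inr hy) (.inl ha) (.inl hb) hd hu⟩
    · exact ⟨C₀, _, hs.step_insert hc hdisj ha hb hab hnotcov hord' hcov
        (.inr ((hord' u hu).eq_left_of_covByIn ha (hcs u hu) hd hcov (.inl ha))) (.inl hu) hx hxs⟩
    · exact ⟨C₀, _, hs.step_insert hc hdisj ha hb hab hnotcov hord' hcov (.inl hd)
        (.inr ((hord' d hd).eq_right_of_covByIn hb (hcs d hd) hu hcov (.inl hb))) hx hxs⟩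
    · exact ⟨C₀, _, hs.step_insert hc hdisj ha hb hab hnotcov hord' hcov (.inl hd) (.inl hu) hx
        hxs⟩

theorem insert_of_not_covByIn (h : AdjunctRep C₀ s l) (hd : d ∈ s) (hu : u ∈ s)
    (hdu : ¬CovByIn s d u) (hx : LiesBetween s d u x) (hxs : x ∉ s) :
    AdjunctRep C₀ (insert x s) (l ++ [({x}, d, u)]) := by
  have hdu_lt : d < u := (hx.left_lt hd hxs).trans (hx.lt_right hu hxs)
  have hnotcov : ∃ z ∈ s, d < z ∧ z < u := by
    by_contra! hcov
    exact hdu ⟨hd, hu, hdu_lt, hcov⟩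
  rw [← union_singleton]
  exact .step {x} d u h subsingleton_singleton.isChain (singleton_nonempty x)
    (disjoint_singleton_right.2 hxs) hd hu hdu_lt hnotcov fun z hz _ hy => hy ▸ hx z hz

theorem exists_insert [Finite α] (h : AdjunctRep C₀ s l) (hs : IsSublattice s)
    (ht : IsSublattice (insert x s)) (hxs : x ∉ s) :
    ∃ C₀' l', AdjunctRep C₀' (insert x s) l' := by
  by_cases hlow : ∃ y ∈ s, y ≤ x
  · by_cases hhigh : ∃ y ∈ s, x ≤ y
    · have hIic : SupClosed (Iic x) := fun _ ha _ hb => sup_le ha hb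
      have hIci : InfClosed (Ici x) := fun _ ha _ hb => le_inf ha hb
      obtain ⟨d, hd⟩ := (hs.supClosed.inter hIic).exists_isGreatest (toFinite _) hlow
      obtain ⟨u, hu⟩ := (hs.infClosed.inter hIci).exists_isLeast (toFinite _) hhigh
      have hx := liesBetween_of_isGreatest_of_isLeast hd hu
      by_cases hdu : CovByIn s d u
      · exact h.exists_insert_of_covByIn hdu hx hxs
      · exact ⟨C₀, _, h.insert_of_not_covByIn hd.1.1 hu.1.1 hdu hx hxs⟩
    · push Not at hhigh
      exact ⟨_, _, h.insert_of_extremal (.inr (forall_lt_of_supClosed_insert ht.supClosed hhigh))⟩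
  · push Not at hlow
    exact ⟨_, _, h.insert_of_extremal (.inl (forall_lt_of_infClosed_insert ht.infClosed hlow))⟩

end AdjunctRep

theorem Dismantlable.exists_adjunctRep [Fintype α] [Nonempty α] (hd : Dismantlable α) :
    ∃ C₀ l, AdjunctRep C₀ (univ : Set α) l := by
  obtain ⟨f, hf, hsub, huniv⟩ := hd
  suffices ∀ i, 1 ≤ i → i ≤ Fintype.card α → ∃ C₀ l, AdjunctRep C₀ (f i) l by
    simpa [huniv] using this _ Fintype.card_pos le_rfl
  intro i hi
  induction i, hi using Nat.le_induction with
  | base =>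
    intro h1
    obtain ⟨x, hx⟩ := ncard_eq_one.1 (hf 1 le_rfl h1).1
    rw [hx]
    exact ⟨{x}, [], .base subsingleton_singleton.isChain (singleton_nonempty x)⟩
  | succ i hi ih =>
    intro hi'
    obtain ⟨x, hxs, hins⟩ := (exists_eq_insert_iff_ncard (toFinite _)).2
      ⟨hsub i hi hi', by rw [(hf i hi (by omega)).1, (hf (i + 1) (by omega) hi').1]⟩
    obtain ⟨C₀, l, h⟩ := ih (by omega)
    have ht := (hf (i + 1) (by omega) hi').2.isSublattice
    rw [← hins] at ht ⊢
    exact h.exists_insert (hf i hi (by omega)).2.isSublattice ht hxs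

end Lattice

theorem stmt4_general {α : Type*} [Lattice α] [Fintype α] [Nonempty α]
    (hd : Dismantlable α) (r : ℕ) :
    (({p : α × α | p.1 ⋖ p.2}.ncard : ℤ) = (Fintype.card α : ℤ) + (r : ℤ) - 2) ↔
      ∃ (C₀ : Set α) (l : List (Set α × α × α)),
        AdjunctRep C₀ Set.univ l ∧ l.length + 1 = r := by
  have hedges : {p : α × α | p.1 ⋖ p.2} = edgesIn univ := by
    ext; exact covByIn_univ.symm
  have hcard : (univ : Set α).ncard = Fintype.card α := by
    rw [ncard_univ, Nat.card_eq_fintype_card]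
  rw [hedges]
  constructor
  · intro h
    obtain ⟨C₀, l, hrep⟩ := hd.exists_adjunctRep
    have hcount := hrep.ncard_edgesIn_add_one
    exact ⟨C₀, l, hrep, by omega⟩
  · rintro ⟨C₀, l, hrep, hlen⟩
    have hcount := hrep.ncard_edgesIn_add_one
    omega

/-- A finite dismantlable lattice with `n` elements has exactly `n + r - 2` covering
edges if and only if it is an adjunct of `r` chains. -/
theorem stmt4 {α : Type*} [Lattice α] [Fintype α] [Nonempty α]
    (hd : Dismantlable α) (r : ℕ) (hr : 1 ≤ r) :
    (({p : α × α | p.1 ⋖ p.2}.ncard : ℤ) = (Fintype.card α : ℤ) + (r : ℤ) - 2) ↔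
      ∃ (C₀ : Set α) (l : List (Set α × α × α)),
        AdjunctRep C₀ Set.univ l ∧ l.length + 1 = r :=
  stmt4_general hd r
end

section
/- Let B be an RC-lattice on n elements. Then B is a basic block having nullity k if and only if B admits an adjunct representation B = C₀ ]^{b₁}_{a₁} C₁ ]^{b₂}_{a₂} C₂ ⋯ ]^{b_k}_{a_k} C_k into chains with aᵢ, bᵢ ∈ C₀ for all i, satisfying: (i) |Cᵢ| = 1 for all 1 ≤ i ≤ k; (ii) n = |C₀| + k; (iii) |Irr(B)| = k + m, where m is the number of distinct adjunct pairs (aᵢ, bᵢ) such that the open interval (aᵢ, bᵢ) of B is contained in Irr(B); and (iv) |C₀| = |Red(B)| + m. Moreover, in that case, if |Red(B)| = r then n = r + m + k. -/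
/-!
Write `Red` and `Irr` for the reducible and the doubly irreducible elements. In an RC-lattice
that is a basic block, every `x ∈ Irr` has a unique lower cover `A x` and a unique upper cover
`B x`, and both are reducible: if, say, `A x` were doubly irreducible, its upper cover would be
`x`, so `x` would be alone in `(A x, B x)`, and deleting `x` would not change the nullity (the
covers `A x ⋖ x ⋖ B x` are traded for `A x ⋖ B x`). With this structure the covering pairs are the
`(A x, x)`, the `(x, B x)` and the consecutive pairs of the chain `Red` with nothing in between, so
the nullity is `|Irr|` minus the number of gaps (consecutive pairs of `Red` with something in
between), and the lattice is a basic block exactly when no `x` is alone in `(A x, B x)`.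

The representation takes for `C₀` the reducible elements together with one element of each gap,
and adjoins every other `x ∈ Irr` as a one-point chain between `A x` and `B x`. Conversely, in
such a representation the reducible elements are the ends of the adjunct pairs, and the count
`|C₀| = |Red| + m` forces each doubly irreducible element of `C₀` to be the only element of `C₀`
inside one of the `m` pairs, which makes it sit between the ends of that pair like an adjoined
point; so the structure above is recovered.
-/

/-- An element of a lattice is join-reducible if it is the join of two elements
both distinct from it. -/
def JoinReducible {α : Type*} [Lattice α] (x : α) : Prop :=
  ∃ y z : α, y ≠ x ∧ z ≠ x ∧ y ⊔ z = x

/-- An element of a lattice is meet-reducible if it is the meet of two elements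
both distinct from it. -/
def MeetReducible {α : Type*} [Lattice α] (x : α) : Prop :=
  ∃ y z : α, y ≠ x ∧ z ≠ x ∧ y ⊓ z = x

/-- An element is reducible if it is join-reducible or meet-reducible. -/
def Reducible {α : Type*} [Lattice α] (x : α) : Prop :=
  JoinReducible x ∨ MeetReducible x

/-- `Red(L)`: the set of reducible elements of the lattice. -/
def RedSet (α : Type*) [Lattice α] : Set α := {x | Reducible x}

/-- `Irr(L)`: the set of doubly irreducible (i.e. non-reducible) elements. -/
def IrrSet (α : Type*) [Lattice α] : Set α := {x | ¬ Reducible x}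

/-- The cover graph of a poset: vertices are the elements, edges are covering pairs. -/
def coverGraph (α : Type*) [PartialOrder α] : SimpleGraph α where
  Adj x y := x ⋖ y ∨ y ⋖ x
  symm := ⟨fun _ _ h => h.symm⟩
  loopless := ⟨fun x h => by rcases h with h | h <;> exact h.lt.false⟩

/-- The nullity of a (finite) poset: `m - n + c` where `m` is the number of edges,
`n` the number of vertices and `c` the number of connected components of the cover graph. -/
noncomputable def nullity (α : Type*) [PartialOrder α] : ℤ :=
  (Nat.card (coverGraph α).edgeSet : ℤ) - (Nat.card α : ℤ)
    + (Nat.card (coverGraph α).ConnectedComponent : ℤ)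

/-- A block: a (finite) lattice whose greatest element is join-reducible and whose
least element is meet-reducible. -/
def IsBlock (α : Type*) [Lattice α] : Prop :=
  (∃ t : α, (∀ x, x ≤ t) ∧ JoinReducible t) ∧ (∃ b : α, (∀ x, b ≤ x) ∧ MeetReducible b)

/-- A block is a basic block if it is a one-element lattice, or has no doubly
irreducible element, or removal of any doubly irreducible element reduces the
nullity by one. -/
def IsBasicBlock (α : Type*) [Lattice α] : Prop :=
  IsBlock α ∧ (Nat.card α = 1 ∨ IrrSet α = ∅ ∨
    ∀ x : α, x ∈ IrrSet α → nullity ↥({x}ᶜ : Set α) = nullity α - 1)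

open Set

section Attached

variable {α : Type*}

/-- The position of the point of a one-element chain adjoined with adjunct pair `(a, b)`. -/
def IsAttached [Preorder α] (a b x : α) : Prop :=
  Iio x = Iic a ∧ Ioi x = Ici b

namespace IsAttached

variable [PartialOrder α] {a b a' b' x w : α}

lemma lt_iff_le_lower (hx : IsAttached a b x) : w < x ↔ w ≤ a := by
  rw [← mem_Iio, hx.1, mem_Iic]

lemma lt_iff_upper_le (hx : IsAttached a b x) : x < w ↔ b ≤ w := by
  rw [← mem_Ioi, hx.2, mem_Ici]

lemma lower_lt (hx : IsAttached a b x) : a < x := hx.lt_iff_le_lower.2 le_rfl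

lemma lt_upper (hx : IsAttached a b x) : x < b := hx.lt_iff_upper_le.2 le_rfl

lemma le_iff_of_ne (hx : IsAttached a b x) (hw : w ≠ x) :
    (w ≤ x ↔ w ≤ a) ∧ (x ≤ w ↔ b ≤ w) :=
  ⟨by rw [← hx.lt_iff_le_lower, hw.le_iff_lt],
    by rw [← hx.lt_iff_upper_le, hw.symm.le_iff_lt]⟩

lemma unique (hx : IsAttached a b x) (hx' : IsAttached a' b' x) : a = a' ∧ b = b' :=
  ⟨le_antisymm (hx'.lt_iff_le_lower.1 hx.lower_lt) (hx.lt_iff_le_lower.1 hx'.lower_lt),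
    le_antisymm (hx.lt_iff_upper_le.1 hx'.lt_upper) (hx'.lt_iff_upper_le.1 hx.lt_upper)⟩

lemma covBy_iff_eq_lower (hx : IsAttached a b x) : w ⋖ x ↔ w = a := by
  refine ⟨fun h => (hx.lt_iff_le_lower.1 h.lt).eq_of_not_lt fun hwa => h.2 hwa hx.lower_lt, ?_⟩
  rintro rfl
  exact ⟨hx.lower_lt, fun c hac hcx => not_lt_of_ge (hx.lt_iff_le_lower.1 hcx) hac⟩

lemma covBy_iff_eq_upper (hx : IsAttached a b x) : x ⋖ w ↔ w = b := by
  refine ⟨fun h => ((hx.lt_iff_upper_le.1 h.lt).eq_of_not_lt fun hbw => h.2 hx.lt_upper hbw).symm,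
    ?_⟩
  rintro rfl
  exact ⟨hx.lt_upper, fun c hxc hcb => not_lt_of_ge (hx.lt_iff_upper_le.1 hxc) hcb⟩

lemma Ioo_eq_singleton_of_lower (hx : IsAttached a b x) (ha : IsAttached a' b' a) :
    Ioo a b = {x} := by
  have hb' : x = b' := (ha.covBy_iff_eq_upper (w := x)).1 ((hx.covBy_iff_eq_lower (w := a)).2 rfl)
  ext w
  refine ⟨fun ⟨haw, hwb⟩ => ?_, fun h => h ▸ ⟨hx.lower_lt, hx.lt_upper⟩⟩
  have hxw : x ≤ w := hb'.symm ▸ ha.lt_iff_upper_le.1 haw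
  exact (hxw.eq_of_not_lt fun h => not_lt_of_ge (hx.lt_iff_upper_le.1 h) hwb).symm

lemma Ioo_eq_singleton_of_upper (hx : IsAttached a b x) (hb : IsAttached a' b' b) :
    Ioo a b = {x} := by
  have ha' : x = a' := (hb.covBy_iff_eq_lower (w := x)).1 ((hx.covBy_iff_eq_upper (w := b)).2 rfl)
  ext w
  refine ⟨fun ⟨haw, hwb⟩ => ?_, fun h => h ▸ ⟨hx.lower_lt, hx.lt_upper⟩⟩
  have hwx : w ≤ x := ha'.symm ▸ hb.lt_iff_le_lower.1 hwb
  exact hwx.eq_of_not_lt fun h => not_lt_of_ge (hx.lt_iff_le_lower.1 h) haw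

lemma of_le_iff (hax : a < x) (hxb : x < b)
    (h : ∀ w ≠ x, (w ≤ x ↔ w ≤ a) ∧ (x ≤ w ↔ b ≤ w)) : IsAttached a b x := by
  refine ⟨Set.ext fun w => ?_, Set.ext fun w => ?_⟩ <;> rcases eq_or_ne w x with rfl | hw
  · exact iff_of_false (lt_irrefl w) (not_le_of_gt hax)
  · exact hw.le_iff_lt.symm.trans (h w hw).1
  · exact iff_of_false (lt_irrefl w) (not_le_of_gt hxb)
  · exact hw.symm.le_iff_lt.symm.trans (h w hw).2

end IsAttached

end Attached

section Reducible

variable {α : Type*} [Lattice α] {a b c x z : α}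

lemma IsAttached.not_joinReducible (hx : IsAttached a b x) : ¬ JoinReducible x := by
  rintro ⟨y, w, hy, hw, rfl⟩
  have hya : y ≤ a := hx.lt_iff_le_lower.1 (lt_of_le_of_ne le_sup_left hy)
  have hwa : w ≤ a := hx.lt_iff_le_lower.1 (lt_of_le_of_ne le_sup_right hw)
  exact not_lt_of_ge (sup_le hya hwa) hx.lower_lt

lemma IsAttached.not_meetReducible (hx : IsAttached a b x) : ¬ MeetReducible x := by
  rintro ⟨y, w, hy, hw, rfl⟩
  have hby : b ≤ y := hx.lt_iff_upper_le.1 (lt_of_le_of_ne inf_le_left hy.symm)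
  have hbw : b ≤ w := hx.lt_iff_upper_le.1 (lt_of_le_of_ne inf_le_right hw.symm)
  exact not_lt_of_ge (le_inf hby hbw) hx.lt_upper

lemma IsAttached.mem_irrSet (hx : IsAttached a b x) : x ∈ IrrSet α := by
  rintro (h | h)
  exacts [hx.not_joinReducible h, hx.not_meetReducible h]

/-- An element `z` strictly between `a` and `b` other than `x` is incomparable to `x`, so
`x ⊔ z = b` and `x ⊓ z = a`. -/
lemma IsAttached.reducible_of_mem_Ioo (hx : IsAttached a b x) (hz : z ∈ Ioo a b) (hzx : z ≠ x) :
    JoinReducible b ∧ MeetReducible a := by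
  have hzx' : ¬ z ≤ x := fun h =>
    not_lt_of_ge (hx.lt_iff_le_lower.1 (lt_of_le_of_ne h hzx)) hz.1
  have hxz' : ¬ x ≤ z := fun h =>
    not_lt_of_ge (hx.lt_iff_upper_le.1 (lt_of_le_of_ne h hzx.symm)) hz.2
  refine ⟨⟨x, z, hx.lt_upper.ne, hz.2.ne, le_antisymm (sup_le hx.lt_upper.le hz.2.le) ?_⟩,
    ⟨x, z, hx.lower_lt.ne', hz.1.ne', le_antisymm ?_ (le_inf hx.lower_lt.le hz.1.le)⟩⟩
  · exact hx.lt_iff_upper_le.1 (lt_of_le_of_ne le_sup_left fun h => hzx' (h ▸ le_sup_right))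
  · exact hx.lt_iff_le_lower.1 (lt_of_le_of_ne inf_le_left fun h => hxz' (h ▸ inf_le_right))

/-- Below a join-irreducible element, the joins stay strictly below, so a maximal element
there is the greatest one. -/
lemma exists_Iio_eq_Iic [Finite α] (hx : ¬ JoinReducible x) (hmin : ¬ IsMin x) :
    ∃ a, Iio x = Iic a := by
  obtain ⟨a, ha⟩ := (toFinite (Iio x)).exists_maximal (not_isMin_iff.1 hmin)
  refine ⟨a, Subset.antisymm (fun w hw => ?_) fun w hw => lt_of_le_of_lt hw ha.prop⟩
  have hlt : a ⊔ w < x :=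
    lt_of_le_of_ne (sup_le ha.prop.le (le_of_lt hw)) fun h => hx ⟨a, w, ha.prop.ne, hw.ne, h⟩
  exact le_sup_right.trans (ha.le_of_ge hlt le_sup_left)

lemma exists_Ioi_eq_Ici [Finite α] (hx : ¬ MeetReducible x) (hmax : ¬ IsMax x) :
    ∃ b, Ioi x = Ici b :=
  exists_Iio_eq_Iic (α := αᵒᵈ) hx hmax

lemma exists_isAttached [Finite α] (hx : x ∈ IrrSet α) (hmin : ¬ IsMin x) (hmax : ¬ IsMax x) :
    ∃ a b, IsAttached a b x := by
  obtain ⟨a, ha⟩ := exists_Iio_eq_Iic (fun h => hx (Or.inl h)) hmin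
  obtain ⟨b, hb⟩ := exists_Ioi_eq_Ici (fun h => hx (Or.inr h)) hmax
  exact ⟨a, b, ha, hb⟩

lemma not_joinReducible_of_forall_lt {C : Set α} (hC : IsChain (· ≤ ·) C)
    (h : ∀ w < c, ∃ v ∈ C, w ≤ v ∧ v < c) : ¬ JoinReducible c := by
  rintro ⟨y, w, hy, hw, rfl⟩
  obtain ⟨u, huC, hyu, hu⟩ := h y (lt_of_le_of_ne le_sup_left hy)
  obtain ⟨v, hvC, hwv, hv⟩ := h w (lt_of_le_of_ne le_sup_right hw)
  have hle : y ⊔ w ≤ u ⊔ v := sup_le_sup hyu hwv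
  rcases hC.total huC hvC with huv | hvu
  · exact not_lt_of_ge (hle.trans (sup_eq_right.2 huv).le) hv
  · exact not_lt_of_ge (hle.trans (sup_eq_left.2 hvu).le) hu

lemma not_meetReducible_of_forall_gt {C : Set α} (hC : IsChain (· ≤ ·) C)
    (h : ∀ w, c < w → ∃ v ∈ C, v ≤ w ∧ c < v) : ¬ MeetReducible c :=
  not_joinReducible_of_forall_lt (α := αᵒᵈ) (C := C) hC.symm h

lemma IsTop.joinReducible {T : α} (hT : IsTop T) (h : Reducible T) : JoinReducible T :=
  h.resolve_right fun ⟨y, _, hy, _, hyz⟩ => hy (le_antisymm (hT y) (hyz ▸ inf_le_left))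

lemma IsBot.meetReducible {B : α} (hB : IsBot B) (h : Reducible B) : MeetReducible B :=
  h.resolve_left fun ⟨y, _, hy, _, hyz⟩ => hy (le_antisymm (hyz ▸ le_sup_left) (hB y))

variable (α) in
lemma exists_isTop [Finite α] [Nonempty α] : ∃ T : α, IsTop T :=
  let ⟨T, hT⟩ := (finite_univ (α := α)).bddAbove
  ⟨T, fun x => hT (mem_univ x)⟩

variable (α) in
lemma exists_isBot [Finite α] [Nonempty α] : ∃ B : α, IsBot B :=
  let ⟨B, hB⟩ := (finite_univ (α := α)).bddBelow
  ⟨B, fun x => hB (mem_univ x)⟩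

end Reducible

section CoverGraph

variable {α : Type*} [PartialOrder α]

variable (α) in
def covers : Set (α × α) := {p | p.1 ⋖ p.2}

lemma card_edgeSet_coverGraph : Nat.card (coverGraph α).edgeSet = (covers α).ncard := by
  have hinj : InjOn (fun p : α × α => s(p.1, p.2)) (covers α) := by
    rintro ⟨u, v⟩ huv ⟨u', v'⟩ huv' h
    rcases Sym2.eq_iff.1 h with ⟨rfl, rfl⟩ | ⟨rfl, rfl⟩
    · rfl
    · exact absurd (huv.lt.trans huv'.lt) (lt_irrefl _)
  have himage : (fun p : α × α => s(p.1, p.2)) '' covers α = (coverGraph α).edgeSet := by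
    ext e
    induction e with
    | _ u v =>
      refine ⟨?_, fun h => ?_⟩
      · rintro ⟨p, hp, hpe⟩
        rw [← hpe]
        exact Or.inl hp
      · rcases h with h | h
        exacts [⟨(u, v), h, rfl⟩, ⟨(v, u), h, Sym2.eq_swap⟩]
  rw [Nat.card_coe_set_eq, ← himage, hinj.ncard_image]

lemma card_connectedComponent_coverGraph [Finite α] {T : α} (hT : IsTop T) :
    Nat.card (coverGraph α).ConnectedComponent = 1 := by
  classical
  have := Fintype.ofFinite α
  have := Fintype.toLocallyFiniteOrder (α := α)
  have hreach : ∀ x, (coverGraph α).Reachable x T := fun x =>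
    (SimpleGraph.reachable_iff_reflTransGen _ _).2
      (Relation.ReflTransGen.mono (fun _ _ h => Or.inl h) _ _ (le_iff_reflTransGen_covBy.1 (hT x)))
  have hconn : (coverGraph α).Preconnected := fun x y => (hreach x).trans (hreach y).symm
  rw [Nat.card_eq_one_iff_unique]
  exact ⟨hconn.subsingleton_connectedComponent, ⟨(coverGraph α).connectedComponentMk T⟩⟩

lemma nullity_eq_of_isTop [Finite α] {T : α} (hT : IsTop T) :
    nullity α = (covers α).ncard - Nat.card α + 1 := by
  rw [nullity, card_edgeSet_coverGraph, card_connectedComponent_coverGraph hT, Nat.cast_one]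

end CoverGraph

section RemovePoint

variable {α : Type*} [PartialOrder α] {a b x : α}

lemma covBy_compl_singleton_iff {y z : ({x}ᶜ : Set α)} :
    y ⋖ z ↔ (y : α) < z ∧ Ioo (y : α) z ⊆ {x} := by
  refine ⟨fun h => ⟨h.lt, fun w hw => ?_⟩,
    fun h => ⟨h.1, fun w hyw hwz => w.2 (h.2 ⟨hyw, hwz⟩)⟩⟩
  by_contra hwx
  exact h.2 (c := ⟨w, hwx⟩) hw.1 hw.2

lemma IsAttached.Ioo_eq_singleton_iff (hx : IsAttached a b x) {y z : α} :
    Ioo y z = {x} ↔ y = a ∧ z = b ∧ Ioo a b = {x} := by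
  refine ⟨fun h => ?_, fun ⟨hy, hz, h⟩ => hy ▸ hz ▸ h⟩
  have hyxz : y < x ∧ x < z := h.symm.subset rfl
  have hy : y ⋖ x := ⟨hyxz.1, fun w hyw hwx => hwx.ne (h.subset ⟨hyw, hwx.trans hyxz.2⟩)⟩
  have hz : x ⋖ z := ⟨hyxz.2, fun w hxw hwz => hxw.ne' (h.subset ⟨hyxz.1.trans hxw, hwz⟩)⟩
  obtain rfl := hx.covBy_iff_eq_lower.1 hy
  obtain rfl := hx.covBy_iff_eq_upper.1 hz
  exact ⟨rfl, rfl, h⟩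

lemma IsAttached.mem_image_covers_compl_iff (hx : IsAttached a b x) {u v : α} :
    (u, v) ∈ Prod.map Subtype.val Subtype.val '' covers ({x}ᶜ : Set α) ↔
      u ≠ x ∧ v ≠ x ∧ (u ⋖ v ∨ (u = a ∧ v = b ∧ Ioo a b = {x})) := by
  refine ⟨?_, fun ⟨hu, hv, h⟩ => ⟨(⟨u, hu⟩, ⟨v, hv⟩), ?_, rfl⟩⟩
  · rintro ⟨⟨⟨u, hu⟩, ⟨v, hv⟩⟩, huv, he⟩
    obtain ⟨rfl, rfl⟩ := Prod.ext_iff.1 he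
    refine ⟨hu, hv, ?_⟩
    obtain ⟨hlt, hsub⟩ := covBy_compl_singleton_iff.1 huv
    rcases subset_singleton_iff_eq.1 hsub with h | h
    exacts [Or.inl (covBy_iff_Ioo_eq.2 ⟨hlt, h⟩), Or.inr (hx.Ioo_eq_singleton_iff.1 h)]
  · refine covBy_compl_singleton_iff.2 ?_
    rcases h with h | ⟨rfl, rfl, h⟩
    · exact ⟨h.lt, (covBy_iff_Ioo_eq.1 h).2.le.trans (empty_subset _)⟩
    · exact ⟨hx.lower_lt.trans hx.lt_upper, h.le⟩

/-- Removing `x` deletes the covers `a ⋖ x ⋖ b` and creates the cover `a ⋖ b` exactly when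
`x` was the only element between `a` and `b`. -/
lemma IsAttached.ncard_covers_compl (hx : IsAttached a b x) [Finite α] :
    (covers ({x}ᶜ : Set α)).ncard + 2 =
      (covers α).ncard + if Ioo a b = {x} then 1 else 0 := by
  have hf : (Prod.map Subtype.val Subtype.val :
      ({x}ᶜ : Set α) × ({x}ᶜ : Set α) → α × α).Injective :=
    Subtype.val_injective.prodMap Subtype.val_injective
  have hunion : Prod.map Subtype.val Subtype.val '' covers ({x}ᶜ : Set α) ∪ {(a, x), (x, b)} =
      covers α ∪ {p | p = (a, b) ∧ Ioo a b = {x}} := by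
    ext ⟨u, v⟩
    simp only [mem_union, hx.mem_image_covers_compl_iff, mem_insert_iff, mem_singleton_iff,
      Prod.mk.injEq]
    rcases eq_or_ne u x with rfl | hu
    · simp [covers, hx.covBy_iff_eq_upper, hx.lower_lt.ne']
    rcases eq_or_ne v x with rfl | hv
    · simp [covers, hx.covBy_iff_eq_lower, hx.lt_upper.ne]
    simp [hu, hv, covers, and_assoc]
  have hdisj :
      Disjoint (Prod.map Subtype.val Subtype.val '' covers ({x}ᶜ : Set α)) {(a, x), (x, b)} := by
    rw [disjoint_right]
    rintro _ (rfl | rfl) h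
    exacts [(hx.mem_image_covers_compl_iff.1 h).2.1 rfl, (hx.mem_image_covers_compl_iff.1 h).1 rfl]
  have hcard := congrArg ncard hunion
  rw [ncard_union_eq hdisj, ncard_image_of_injective _ hf,
    ncard_pair (by simp [hx.lower_lt.ne])] at hcard
  rw [hcard]
  split_ifs with h
  · have hab : (a, b) ∉ covers α := fun hab => hab.2 hx.lower_lt hx.lt_upper
    simp only [h, and_true, ofPred_eq_eq_singleton]
    rw [ncard_union_eq (disjoint_singleton_right.2 hab), ncard_singleton]
  · simp [h]

lemma IsAttached.nullity_compl_eq_sub_one_iff [Finite α] {T : α} (hT : IsTop T)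
    (hx : IsAttached a b x) : nullity ({x}ᶜ : Set α) = nullity α - 1 ↔ Ioo a b ≠ {x} := by
  have hTx : T ∈ ({x}ᶜ : Set α) := (hx.lt_upper.trans_le (hT b)).ne'
  have hT' : IsTop (⟨T, hTx⟩ : ({x}ᶜ : Set α)) := fun y => hT y
  have hcard : Nat.card ({x}ᶜ : Set α) + 1 = Nat.card α := by
    rw [Nat.card_coe_set_eq, ← ncard_singleton x, add_comm, ncard_add_ncard_compl]
  have hcovers := hx.ncard_covers_compl
  rw [nullity_eq_of_isTop hT, nullity_eq_of_isTop (α := ({x}ᶜ : Set α)) hT']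
  split_ifs at hcovers with h <;> simp only [h, ne_eq, not_true_eq_false, not_false_eq_true,
    iff_false, iff_true] <;> omega

end RemovePoint

section Chain

variable {α : Type*} [PartialOrder α] {S : Set α} {p q : α × α} {z : α}

def consPairs (S : Set α) : Set (α × α) :=
  {p | p.1 ∈ S ∧ p.2 ∈ S ∧ p.1 < p.2 ∧ ∀ z ∈ S, z ∉ Ioo p.1 p.2}

lemma le_or_le_of_mem_consPairs (hS : IsChain (· ≤ ·) S) (hp : p ∈ consPairs S)
    (hz : z ∈ S) : z ≤ p.1 ∨ p.2 ≤ z := by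
  by_contra! h
  exact hp.2.2.2 z hz ⟨lt_of_le_not_ge ((hS.total hp.1 hz).resolve_right h.1) h.1,
    lt_of_le_not_ge ((hS.total hz hp.2.1).resolve_right h.2) h.2⟩

lemma separated_of_mem_consPairs (hS : IsChain (· ≤ ·) S) (hp : p ∈ consPairs S)
    (hq : q ∈ consPairs S) (hpq : p ≠ q) : p.2 ≤ q.1 ∨ q.2 ≤ p.1 := by
  rcases le_or_le_of_mem_consPairs hS hp hq.1 with h₁ | h₁
  · rcases le_or_le_of_mem_consPairs hS hq hp.1 with h₂ | h₂
    · rcases le_or_le_of_mem_consPairs hS hp hq.2.1 with h₃ | h₃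
      · exact Or.inr h₃
      · rcases le_or_le_of_mem_consPairs hS hq hp.2.1 with h₄ | h₄
        · exact Or.inl h₄
        · exact absurd (Prod.ext (le_antisymm h₂ h₁) (le_antisymm h₃ h₄)) hpq
    · exact Or.inr h₂
  · exact Or.inl h₁

lemma disjoint_Ioo_of_mem_consPairs (hS : IsChain (· ≤ ·) S) (hp : p ∈ consPairs S)
    (hq : q ∈ consPairs S) (hpq : p ≠ q) : Disjoint (Ioo p.1 p.2) (Ioo q.1 q.2) := by
  rw [disjoint_left]
  rintro w ⟨hpw, hwp⟩ ⟨hqw, hwq⟩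
  rcases separated_of_mem_consPairs hS hp hq hpq with h | h
  exacts [lt_asymm hqw (hwp.trans_le h), lt_asymm hpw (hwq.trans_le h)]

lemma IsChain.exists_isGreatest_s7 [Finite α] (hS : IsChain (· ≤ ·) S) (hne : S.Nonempty) :
    ∃ M, IsGreatest S M := by
  obtain ⟨M, hM⟩ := (toFinite S).exists_maximal hne
  exact ⟨M, hM.prop, fun y hy => (hS.total hy hM.prop).elim id (hM.2 hy)⟩

/-- Sending a consecutive pair to its first entry misses only the greatest element. -/
lemma ncard_consPairs_add_one [Finite α] (hS : IsChain (· ≤ ·) S) (hne : S.Nonempty) :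
    (consPairs S).ncard + 1 = S.ncard := by
  obtain ⟨M, hM⟩ := hS.exists_isGreatest_s7 hne
  have hinj : InjOn Prod.fst (consPairs S) := by
    rintro ⟨y, z⟩ hz ⟨y', z'⟩ hz' (rfl : y = y')
    rcases le_or_le_of_mem_consPairs hS hz hz'.2.1 with h | h
    · exact absurd hz'.2.2.1 (not_lt_of_ge h)
    · rcases le_or_le_of_mem_consPairs hS hz' hz.2.1 with h' | h'
      · exact absurd hz.2.2.1 (not_lt_of_ge h')
      · exact Prod.ext rfl (le_antisymm h h')
  have himage : Prod.fst '' consPairs S = S \ {M} := by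
    refine Subset.antisymm ?_ fun y ⟨hy, hyM⟩ => ?_
    · rintro _ ⟨p, hp, rfl⟩
      exact ⟨hp.1, (hp.2.2.1.trans_le (hM.2 hp.2.1)).ne⟩
    obtain ⟨z, hz⟩ := (toFinite (S ∩ Ioi y)).exists_minimal
      ⟨M, hM.1, lt_of_le_of_ne (hM.2 hy) hyM⟩
    exact ⟨(y, z), ⟨hy, hz.prop.1, hz.prop.2, fun w hw hyw => hz.not_lt ⟨hw, hyw.1⟩ hyw.2⟩,
      rfl⟩
  rw [← hinj.ncard_image, himage, ncard_sdiff_singleton_add_one hM.1]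

variable {P : Set (α × α)} {f : α × α → α}

lemma injOn_of_mem_Ioo (hS : IsChain (· ≤ ·) S) (hP : P ⊆ consPairs S)
    (hf : ∀ p ∈ P, f p ∈ Ioo p.1 p.2) : InjOn f P := by
  intro p hp q hq hpq
  by_contra hne
  exact disjoint_left.1 (disjoint_Ioo_of_mem_consPairs hS (hP hp) (hP hq) hne) (hf p hp)
    (hpq ▸ hf q hq)

lemma IsChain.union_image_of_mem_Ioo (hS : IsChain (· ≤ ·) S) (hP : P ⊆ consPairs S)
    (hf : ∀ p ∈ P, f p ∈ Ioo p.1 p.2) : IsChain (· ≤ ·) (S ∪ f '' P) := by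
  have hSf : ∀ y ∈ S, ∀ q ∈ P, y ≤ f q ∨ f q ≤ y := fun y hy q hq =>
    (le_or_le_of_mem_consPairs hS (hP hq) hy).imp (fun h => h.trans (hf q hq).1.le)
      fun h => (hf q hq).2.le.trans h
  rintro _ (hy | ⟨p, hp, rfl⟩) _ (hz | ⟨q, hq, rfl⟩) hne
  · exact hS hy hz hne
  · exact hSf _ hy q hq
  · exact (hSf _ hz p hp).symm
  · have hpq : p ≠ q := fun h => hne (h ▸ rfl)
    rcases separated_of_mem_consPairs hS (hP hp) (hP hq) hpq with h | h
    · exact Or.inl ((hf p hp).2.le.trans (h.trans (hf q hq).1.le))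
    · exact Or.inr ((hf q hq).2.le.trans (h.trans (hf p hp).1.le))

lemma IsChain.isAttached_of_inter_Ioo_eq {a b c : α} (hS : IsChain (· ≤ ·) S) (ha : a ∈ S)
    (hb : b ∈ S) (hI : S ∩ Ioo a b = {c}) (hdown : ∀ w < c, ∃ v ∈ S, w ≤ v ∧ v < c)
    (hup : ∀ w, c < w → ∃ v ∈ S, v ≤ w ∧ c < v) : IsAttached a b c := by
  have hc : c ∈ Ioo a b := (hI.symm.subset rfl).2
  have hnot : ∀ v ∈ S, v ∈ Ioo a b → v = c := fun v hv hvI => hI.subset ⟨hv, hvI⟩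
  refine ⟨Subset.antisymm (fun w hw => ?_) fun w hw => lt_of_le_of_lt hw hc.1,
    Subset.antisymm (fun w hw => ?_) fun w hw => lt_of_lt_of_le hc.2 hw⟩
  · obtain ⟨v, hv, hwv, hvc⟩ := hdown w hw
    refine hwv.trans ?_
    rcases hS.total hv ha with h | h
    · exact h
    rcases h.lt_or_eq with h | rfl
    · exact absurd (hnot v hv ⟨h, hvc.trans hc.2⟩) hvc.ne
    · exact le_rfl
  · obtain ⟨v, hv, hvw, hcv⟩ := hup w hw
    refine le_trans ?_ hvw
    rcases hS.total hb hv with h | h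
    · exact h
    rcases h.lt_or_eq with h | rfl
    · exact absurd (hnot v hv ⟨hc.1.trans hcv, h⟩) hcv.ne'
    · exact le_rfl

end Chain

lemma IsBlock.isBasicBlock_iff {α : Type*} [Lattice α] (hB : IsBlock α) :
    IsBasicBlock α ↔ ∀ x ∈ IrrSet α, nullity ({x}ᶜ : Set α) = nullity α - 1 := by
  refine ⟨fun h => ?_, fun h => ⟨hB, Or.inr (Or.inr h)⟩⟩
  rcases h.2 with h1 | h0 | h
  · obtain ⟨T, -, y, -, hy, -⟩ := hB.1
    have := (Nat.card_eq_one_iff_unique.1 h1).1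
    exact absurd (Subsingleton.elim y T) hy
  · simp [h0]
  · exact h

section Gaps

variable {α : Type*} [Lattice α]

lemma mem_irrSet_iff {x : α} : x ∈ IrrSet α ↔ x ∉ RedSet α := Iff.rfl

variable (α) in
def gaps : Set (α × α) := {p ∈ consPairs (RedSet α) | (Ioo p.1 p.2).Nonempty}

lemma mem_irrSet_of_mem_gaps {p : α × α} (hp : p ∈ gaps α) {w : α} (hw : w ∈ Ioo p.1 p.2) :
    w ∈ IrrSet α := fun hred => hp.1.2.2.2 w hred hw

structure IrrAttached (A B : α → α) : Prop where
  isChain : IsChain (· ≤ ·) (RedSet α)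
  isAttached : ∀ x ∈ IrrSet α, IsAttached (A x) (B x) x
  lower_mem : ∀ x ∈ IrrSet α, A x ∈ RedSet α
  upper_mem : ∀ x ∈ IrrSet α, B x ∈ RedSet α

namespace IrrAttached

variable {A B : α → α} (h : IrrAttached A B)
include h

lemma covers_eq : covers α = (consPairs (RedSet α) \ gaps α) ∪
    ((fun x => (A x, x)) '' IrrSet α ∪ (fun x => (x, B x)) '' IrrSet α) := by
  ext ⟨y, z⟩
  simp only [covers, mem_ofPred_eq, mem_union, mem_sdiff, mem_image, Prod.mk.injEq]
  by_cases hz : z ∈ IrrSet α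
  · rw [(h.isAttached z hz).covBy_iff_eq_lower]
    refine ⟨by rintro rfl; exact Or.inr (Or.inl ⟨z, hz, rfl, rfl⟩), ?_⟩
    rintro (⟨hp, -⟩ | ⟨x, -, rfl, rfl⟩ | ⟨x, hx, rfl, rfl⟩)
    exacts [absurd hp.2.1 hz, rfl, absurd (h.upper_mem x hx) hz]
  by_cases hy : y ∈ IrrSet α
  · rw [(h.isAttached y hy).covBy_iff_eq_upper]
    refine ⟨by rintro rfl; exact Or.inr (Or.inr ⟨y, hy, rfl, rfl⟩), ?_⟩
    rintro (⟨hp, -⟩ | ⟨x, hx, rfl, rfl⟩ | ⟨x, -, rfl, rfl⟩)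
    exacts [absurd hp.1 hy, absurd hx hz, rfl]
  rw [mem_irrSet_iff, not_not] at hy hz
  rw [covBy_iff_Ioo_eq]
  constructor
  · rintro ⟨hyz, hI⟩
    refine Or.inl ⟨⟨hy, hz, hyz, fun w _ hw => hI.subset hw⟩, fun hg => ?_⟩
    exact hg.2.ne_empty hI
  · rintro (⟨hp, hg⟩ | ⟨x, hx, -, rfl⟩ | ⟨x, hx, rfl, -⟩)
    · exact ⟨hp.2.2.1, not_nonempty_iff_eq_empty.1 fun hne => hg ⟨hp, hne⟩⟩
    · exact absurd hz hx
    · exact absurd hy hx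

lemma ncard_covers_add_ncard_gaps [Finite α] :
    (covers α).ncard + (gaps α).ncard =
      (consPairs (RedSet α)).ncard + 2 * (IrrSet α).ncard := by
  have hsub : gaps α ⊆ consPairs (RedSet α) := fun p hp => hp.1
  have hinjA : InjOn (fun x => (A x, x)) (IrrSet α) := fun x _ y _ hxy => (Prod.ext_iff.1 hxy).2
  have hinjB : InjOn (fun x => (x, B x)) (IrrSet α) := fun x _ y _ hxy => (Prod.ext_iff.1 hxy).1
  have hdisjAB :
      Disjoint ((fun x => (A x, x)) '' IrrSet α) ((fun x => (x, B x)) '' IrrSet α) := by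
    rw [disjoint_left]
    rintro _ ⟨x, hx, rfl⟩ ⟨y, hy, hyx⟩
    rw [Prod.mk.injEq] at hyx
    exact hx (hyx.2 ▸ h.upper_mem y hy)
  have hdisj : Disjoint (consPairs (RedSet α) \ gaps α)
      ((fun x => (A x, x)) '' IrrSet α ∪ (fun x => (x, B x)) '' IrrSet α) := by
    rw [disjoint_union_right, disjoint_right, disjoint_right]
    constructor
    · rintro _ ⟨x, hx, rfl⟩ hp
      exact hx hp.1.2.1
    · rintro _ ⟨x, hx, rfl⟩ hp
      exact hx hp.1.1
  rw [h.covers_eq, ncard_union_eq hdisj, ncard_union_eq hdisjAB, hinjA.ncard_image,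
    hinjB.ncard_image, ncard_sdiff hsub]
  have := ncard_le_ncard hsub
  omega

lemma redSet_nonempty [Nonempty α] : (RedSet α).Nonempty := by
  obtain ⟨x⟩ := ‹Nonempty α›
  by_cases hx : x ∈ IrrSet α
  exacts [⟨A x, h.lower_mem x hx⟩, ⟨x, not_not.1 hx⟩]

lemma nullity_eq [Finite α] [Nonempty α] :
    nullity α = (IrrSet α).ncard - (gaps α).ncard := by
  obtain ⟨T, hT⟩ := exists_isTop α
  have hcard : (RedSet α).ncard + (IrrSet α).ncard = Nat.card α := ncard_add_ncard_compl _
  have hcovers := h.ncard_covers_add_ncard_gaps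
  have hcons := ncard_consPairs_add_one h.isChain h.redSet_nonempty
  rw [nullity_eq_of_isTop hT]
  omega

lemma isBlock [Finite α] [Nonempty α] : IsBlock α := by
  obtain ⟨T, hT⟩ := exists_isTop α
  obtain ⟨Bo, hBo⟩ := exists_isBot α
  have hTred : Reducible T := not_not.1 fun hT' =>
    not_le_of_gt (h.isAttached T hT').lt_upper (hT _)
  have hBored : Reducible Bo := not_not.1 fun hBo' =>
    not_le_of_gt (h.isAttached Bo hBo').lower_lt (hBo _)
  exact ⟨⟨T, hT, hT.joinReducible hTred⟩, ⟨Bo, hBo, hBo.meetReducible hBored⟩⟩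

lemma isBasicBlock_iff [Finite α] [Nonempty α] :
    IsBasicBlock α ↔ ∀ x ∈ IrrSet α, Ioo (A x) (B x) ≠ {x} := by
  obtain ⟨T, hT⟩ := exists_isTop α
  rw [h.isBlock.isBasicBlock_iff]
  exact forall₂_congr fun x hx => (h.isAttached x hx).nullity_compl_eq_sub_one_iff hT

lemma eq_of_mem_gaps {p : α × α} (hp : p ∈ gaps α) {w : α} (hw : w ∈ Ioo p.1 p.2) :
    (A w, B w) = p := by
  have hwI := mem_irrSet_of_mem_gaps hp hw
  have hw' := h.isAttached w hwI
  refine Prod.ext (le_antisymm ?_ (hw'.lt_iff_le_lower.1 hw.1))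
    (le_antisymm (hw'.lt_iff_upper_le.1 hw.2) ?_)
  · refine (le_or_le_of_mem_consPairs h.isChain hp.1 (h.lower_mem w hwI)).resolve_right ?_
    exact fun h' => not_lt_of_ge h' (hw'.lower_lt.trans hw.2)
  · refine (le_or_le_of_mem_consPairs h.isChain hp.1 (h.upper_mem w hwI)).resolve_left ?_
    exact fun h' => not_lt_of_ge h' (hw.1.trans hw'.lt_upper)

lemma mem_gaps_iff {p : α × α} :
    p ∈ gaps α ↔ (∃ x ∈ IrrSet α, (A x, B x) = p) ∧ Ioo p.1 p.2 ⊆ IrrSet α := by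
  refine ⟨fun hp => ?_, ?_⟩
  · obtain ⟨w, hw⟩ := hp.2
    exact ⟨⟨w, mem_irrSet_of_mem_gaps hp hw, h.eq_of_mem_gaps hp hw⟩,
      fun v hv => mem_irrSet_of_mem_gaps hp hv⟩
  · rintro ⟨⟨x, hx, rfl⟩, hI⟩
    have hx' := h.isAttached x hx
    exact ⟨⟨h.lower_mem x hx, h.upper_mem x hx, hx'.lower_lt.trans hx'.lt_upper,
      fun z hz hzI => hI hzI hz⟩, x, hx'.lower_lt, hx'.lt_upper⟩

end IrrAttached

end Gaps

namespace AdjunctRep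

variable {α : Type*} [Lattice α] {C₀ s : Set α} {l : List (Set α × α × α)}
  {t : Set α × α × α} {x w : α}

lemma isChain (h : AdjunctRep C₀ s l) : IsChain (· ≤ ·) C₀ := by
  induction h with
  | base hchain => exact hchain
  | step _ _ _ _ _ _ _ _ _ _ _ _ ih => exact ih

lemma nonempty (h : AdjunctRep C₀ s l) : C₀.Nonempty := by
  induction h with
  | base _ hne => exact hne
  | step _ _ _ _ _ _ _ _ _ _ _ _ ih => exact ih

lemma subset (h : AdjunctRep C₀ s l) : C₀ ⊆ s := by
  induction h with
  | base => exact subset_rfl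
  | step _ _ _ _ _ _ _ _ _ _ _ _ ih => exact ih.trans subset_union_left

lemma subset_of_mem (h : AdjunctRep C₀ s l) (ht : t ∈ l) : t.1 ⊆ s := by
  induction h with
  | base => simp at ht
  | step c a b _ _ _ _ _ _ _ _ _ ih =>
    rcases List.mem_append.1 ht with ht | ht
    · exact (ih ht).trans subset_union_left
    · rw [List.mem_singleton.1 ht]
      exact subset_union_right

lemma mem_or (h : AdjunctRep C₀ s l) (hw : w ∈ s) : w ∈ C₀ ∨ ∃ t ∈ l, w ∈ t.1 := by
  induction h with
  | base => exact Or.inl hw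
  | step c a b _ _ _ _ _ _ _ _ _ ih =>
    rcases hw with hw | hw
    · exact (ih hw).imp_right fun ⟨t, ht, hwt⟩ => ⟨t, List.mem_append_left _ ht, hwt⟩
    · exact Or.inr ⟨(c, a, b), List.mem_append_right _ (List.mem_singleton_self _), hw⟩

lemma disjoint_of_mem (h : AdjunctRep C₀ s l) (ht : t ∈ l) : Disjoint C₀ t.1 := by
  induction h with
  | base => simp at ht
  | step c a b hs _ _ hdisj _ _ _ _ _ ih =>
    rcases List.mem_append.1 ht with ht | ht
    · exact ih ht
    · rw [List.mem_singleton.1 ht]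
      exact hdisj.mono_left hs.subset

lemma ncard_eq [Finite α] (h : AdjunctRep C₀ s l) (hone : ∀ t ∈ l, t.1.ncard = 1) :
    s.ncard = C₀.ncard + l.length := by
  induction h with
  | base => simp
  | step c a b _ _ _ hdisj _ _ _ _ _ ih =>
    rw [ncard_union_eq hdisj, ih fun t ht => hone t (List.mem_append_left _ ht),
      hone _ (List.mem_append_right _ (List.mem_singleton_self _)), List.length_append,
      List.length_singleton, add_assoc]

/-- Since all adjunct pairs lie in `C₀`, the adjunct order of a later step is compatible
with that of an earlier one. -/
lemma le_iff (h : AdjunctRep C₀ s l) (hp : ∀ t ∈ l, t.2.1 ∈ C₀ ∧ t.2.2 ∈ C₀)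
    (ht : t ∈ l) (hx : x ∈ t.1) (hw : w ∈ s) (hwt : w ∉ t.1) :
    (w ≤ x ↔ w ≤ t.2.1) ∧ (x ≤ w ↔ t.2.2 ≤ w) := by
  induction h generalizing w with
  | base => simp at ht
  | @step s l c a b hs _ _ hdisj _ _ _ _ hord ih =>
    have hp' : ∀ t ∈ l, t.2.1 ∈ C₀ ∧ t.2.2 ∈ C₀ := fun t ht =>
      hp t (List.mem_append_left _ ht)
    have hab := hp _ (List.mem_append_right _ (List.mem_singleton_self _))
    rcases List.mem_append.1 ht with ht | ht
    · have hxs := hs.subset_of_mem ht hx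
      rcases hw with hw | hw
      · exact ih hp' ht hw hwt
      · have hCt := hs.disjoint_of_mem ht
        have hta := ih hp' ht (hs.subset hab.1) (disjoint_left.1 hCt hab.1)
        have htb := ih hp' ht (hs.subset hab.2) (disjoint_left.1 hCt hab.2)
        rw [(hord x hxs w hw).1, (hord x hxs w hw).2, (hord _ (hs.subset (hp' t ht).1) w hw).2,
          (hord _ (hs.subset (hp' t ht).2) w hw).1]
        exact ⟨htb.1, hta.2⟩
    · obtain rfl := List.mem_singleton.1 ht
      exact hord w (hw.resolve_right hwt) x hx

lemma exists_mem_Ioo (h : AdjunctRep C₀ s l) (hp : ∀ t ∈ l, t.2.1 ∈ C₀ ∧ t.2.2 ∈ C₀)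
    (ht : t ∈ l) : ∃ z ∈ C₀, z ∈ Ioo t.2.1 t.2.2 := by
  induction h generalizing t with
  | base => simp at ht
  | @step s l c a b hs _ _ _ _ _ _ hnotcov _ ih =>
    have hp' : ∀ t ∈ l, t.2.1 ∈ C₀ ∧ t.2.2 ∈ C₀ := fun t ht =>
      hp t (List.mem_append_left _ ht)
    rcases List.mem_append.1 ht with ht | ht
    · exact ih hp' ht
    obtain rfl := List.mem_singleton.1 ht
    obtain ⟨haC, hbC⟩ := hp _ (List.mem_append_right _ (List.mem_singleton_self _))
    obtain ⟨z, hz, haz, hzb⟩ := hnotcov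
    rcases hs.mem_or hz with hzC | ⟨t', ht', hzt'⟩
    · exact ⟨z, hzC, haz, hzb⟩
    obtain ⟨z', hz'C, hz'⟩ := ih hp' ht'
    have hCt' := hs.disjoint_of_mem ht'
    have ha := (hs.le_iff hp' ht' hzt' (hs.subset haC) (disjoint_left.1 hCt' haC)).1.1 haz.le
    have hb := (hs.le_iff hp' ht' hzt' (hs.subset hbC) (disjoint_left.1 hCt' hbC)).2.1 hzb.le
    exact ⟨z', hz'C, ha.trans_lt hz'.1, hz'.2.trans_le hb⟩

end AdjunctRep

section PointAdjunct

variable {α : Type*} [Lattice α]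

def irrAdjunctPairs (l : List (Set α × α × α)) : Set (α × α) :=
  {p | (∃ t ∈ l, t.2 = p) ∧ Ioo p.1 p.2 ⊆ IrrSet α}

/-- An adjunct representation by one-point chains, with the order of the steps forgotten. -/
structure IsPointAdjunct (C₀ : Set α) (l : List (Set α × α × α)) : Prop where
  isChain : IsChain (· ≤ ·) C₀
  mem_or : ∀ y, y ∈ C₀ ∨ ∃ t ∈ l, y ∈ t.1
  pair_mem : ∀ t ∈ l, t.2.1 ∈ C₀ ∧ t.2.2 ∈ C₀
  exists_mem_Ioo : ∀ t ∈ l, ∃ z ∈ C₀, z ∈ Ioo t.2.1 t.2.2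
  exists_isAttached : ∀ t ∈ l, ∃ x ∉ C₀, t.1 = {x} ∧ IsAttached t.2.1 t.2.2 x

lemma AdjunctRep.isPointAdjunct {C₀ : Set α} {l : List (Set α × α × α)}
    (h : AdjunctRep C₀ univ l) (hp : ∀ t ∈ l, t.2.1 ∈ C₀ ∧ t.2.2 ∈ C₀)
    (hone : ∀ t ∈ l, t.1.ncard = 1) : IsPointAdjunct C₀ l := by
  refine ⟨h.isChain, fun y => h.mem_or (mem_univ y), hp, fun t ht => h.exists_mem_Ioo hp ht,
    fun t ht => ?_⟩
  obtain ⟨x, hx⟩ := ncard_eq_one.1 (hone t ht)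
  have hxt : x ∈ t.1 := hx ▸ rfl
  have hxC : x ∉ C₀ := disjoint_right.1 (h.disjoint_of_mem ht) hxt
  have hord : ∀ w ∉ t.1, (w ≤ x ↔ w ≤ t.2.1) ∧ (x ≤ w ↔ t.2.2 ≤ w) := fun w hw =>
    h.le_iff hp ht hxt (mem_univ w) hw
  have hnot : ∀ w ∈ C₀, w ∉ t.1 := fun w hw => disjoint_left.1 (h.disjoint_of_mem ht) hw
  refine ⟨x, hxC, hx, .of_le_iff ?_ ?_ fun w hw => hord w (hx ▸ hw)⟩
  · exact lt_of_le_of_ne ((hord _ (hnot _ (hp t ht).1)).1.2 le_rfl)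
      (ne_of_mem_of_not_mem (hp t ht).1 hxC)
  · exact lt_of_le_of_ne ((hord _ (hnot _ (hp t ht).2)).2.2 le_rfl)
      (ne_of_mem_of_not_mem (hp t ht).2 hxC).symm

end PointAdjunct

namespace IsPointAdjunct

variable {α : Type*} [Lattice α] {C₀ : Set α} {l : List (Set α × α × α)}
  {t : Set α × α × α} {c x : α}

lemma reducible_of_mem (H : IsPointAdjunct C₀ l) (ht : t ∈ l) :
    JoinReducible t.2.2 ∧ MeetReducible t.2.1 := by
  obtain ⟨x, hxC, -, hx⟩ := H.exists_isAttached t ht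
  obtain ⟨z, hzC, hz⟩ := H.exists_mem_Ioo t ht
  exact hx.reducible_of_mem_Ioo hz (ne_of_mem_of_not_mem hzC hxC)

lemma exists_mem_le_lt (H : IsPointAdjunct C₀ l) (hcb : ∀ t ∈ l, t.2.2 ≠ c)
    {w : α} (hw : w < c) : ∃ v ∈ C₀, w ≤ v ∧ v < c := by
  rcases H.mem_or w with hwC | ⟨t, ht, hwt⟩
  · exact ⟨w, hwC, le_rfl, hw⟩
  obtain ⟨x, -, hxt, hx⟩ := H.exists_isAttached t ht
  obtain rfl : w = x := mem_singleton_iff.1 (hxt ▸ hwt)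
  exact ⟨t.2.2, (H.pair_mem t ht).2, hx.lt_upper.le,
    lt_of_le_of_ne (hx.lt_iff_upper_le.1 hw) (hcb t ht)⟩

lemma exists_mem_le_gt (H : IsPointAdjunct C₀ l) (hca : ∀ t ∈ l, t.2.1 ≠ c)
    {w : α} (hw : c < w) : ∃ v ∈ C₀, v ≤ w ∧ c < v := by
  rcases H.mem_or w with hwC | ⟨t, ht, hwt⟩
  · exact ⟨w, hwC, le_rfl, hw⟩
  obtain ⟨x, -, hxt, hx⟩ := H.exists_isAttached t ht
  obtain rfl : w = x := mem_singleton_iff.1 (hxt ▸ hwt)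
  exact ⟨t.2.1, (H.pair_mem t ht).1, hx.lower_lt.le,
    lt_of_le_of_ne (hx.lt_iff_le_lower.1 hw) (hca t ht).symm⟩

lemma mem_redSet_iff (H : IsPointAdjunct C₀ l) :
    x ∈ RedSet α ↔ ∃ t ∈ l, t.2.1 = x ∨ t.2.2 = x := by
  refine ⟨fun hx => ?_, ?_⟩
  · by_contra! hend
    rcases H.mem_or x with hxC | ⟨t, ht, hxt⟩
    · rcases hx with hx | hx
      · exact not_joinReducible_of_forall_lt H.isChain
          (fun w => H.exists_mem_le_lt (fun t ht => (hend t ht).2)) hx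
      · exact not_meetReducible_of_forall_gt H.isChain
          (fun w => H.exists_mem_le_gt (fun t ht => (hend t ht).1)) hx
    · obtain ⟨y, -, hyt, hy⟩ := H.exists_isAttached t ht
      obtain rfl : x = y := mem_singleton_iff.1 (hyt ▸ hxt)
      exact hy.mem_irrSet hx
  · rintro ⟨t, ht, rfl | rfl⟩
    exacts [Or.inr (H.reducible_of_mem ht).2, Or.inl (H.reducible_of_mem ht).1]

lemma redSet_subset (H : IsPointAdjunct C₀ l) : RedSet α ⊆ C₀ := by
  intro x hx
  obtain ⟨t, ht, rfl | rfl⟩ := H.mem_redSet_iff.1 hx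
  exacts [(H.pair_mem t ht).1, (H.pair_mem t ht).2]

lemma irrAdjunctPairs_subset (H : IsPointAdjunct C₀ l) :
    irrAdjunctPairs l ⊆ consPairs (RedSet α) := by
  rintro _ ⟨⟨t, ht, rfl⟩, hI⟩
  obtain ⟨x, -, -, hx⟩ := H.exists_isAttached t ht
  exact ⟨Or.inr (H.reducible_of_mem ht).2, Or.inl (H.reducible_of_mem ht).1,
    hx.lower_lt.trans hx.lt_upper, fun z hz hzI => hI hzI hz⟩

/-- Each irreducible adjunct pair contains an element of `C₀`, necessarily irreducible, and
distinct pairs have disjoint intervals; the count `|C₀| = |Red| + m` then leaves no room for a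
second element of `C₀` in a pair, nor for an element of `C₀ ∩ Irr` outside the pairs. -/
lemma exists_inter_Ioo_eq_singleton [Finite α] (H : IsPointAdjunct C₀ l)
    (hm : C₀.ncard = (RedSet α).ncard + (irrAdjunctPairs l).ncard) (hc : c ∈ C₀)
    (hcI : c ∈ IrrSet α) : ∃ p ∈ irrAdjunctPairs l, C₀ ∩ Ioo p.1 p.2 = {c} := by
  have hRed : IsChain (· ≤ ·) (RedSet α) := H.isChain.mono H.redSet_subset
  have hP := H.irrAdjunctPairs_subset
  have hex : ∀ p ∈ irrAdjunctPairs l, ∃ z ∈ C₀, z ∈ Ioo p.1 p.2 := by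
    rintro _ ⟨⟨t, ht, rfl⟩, -⟩
    exact H.exists_mem_Ioo t ht
  have : Nonempty α := ⟨c⟩
  choose! f hfC hf using hex
  have hinj : InjOn f (irrAdjunctPairs l) := injOn_of_mem_Ioo hRed hP hf
  have himage : f '' irrAdjunctPairs l = C₀ \ RedSet α := by
    refine eq_of_subset_of_ncard_le ?_ ?_ (toFinite _)
    · rintro _ ⟨p, hp, rfl⟩
      exact ⟨hfC p hp, hp.2 (hf p hp)⟩
    · rw [ncard_sdiff H.redSet_subset, hinj.ncard_image]
      omega
  obtain ⟨p, hp, rfl⟩ : c ∈ f '' irrAdjunctPairs l := himage ▸ ⟨hc, hcI⟩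
  refine ⟨p, hp, Subset.antisymm (fun c' ⟨hc'C, hc'⟩ => ?_) ?_⟩
  · obtain ⟨q, hq, rfl⟩ : c' ∈ f '' irrAdjunctPairs l := himage ▸ ⟨hc'C, hp.2 hc'⟩
    obtain rfl : q = p := by
      by_contra hne
      exact disjoint_left.1 (disjoint_Ioo_of_mem_consPairs hRed (hP hq) (hP hp) hne) (hf q hq) hc'
    rfl
  · rintro _ rfl
    exact ⟨hfC p hp, hf p hp⟩

lemma exists_isAttached_of_mem_irrSet [Finite α] (H : IsPointAdjunct C₀ l)
    (hm : C₀.ncard = (RedSet α).ncard + (irrAdjunctPairs l).ncard) (hx : x ∈ IrrSet α) :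
    ∃ a b, IsAttached a b x ∧ a ∈ RedSet α ∧ b ∈ RedSet α ∧ Ioo a b ≠ {x} ∧
      ∃ t ∈ l, t.2 = (a, b) := by
  rcases H.mem_or x with hxC | ⟨t, ht, hxt⟩
  · obtain ⟨_, ⟨⟨t, ht, rfl⟩, -⟩, hI⟩ := H.exists_inter_Ioo_eq_singleton hm hxC hx
    have hend : ∀ t ∈ l, t.2.1 ≠ x ∧ t.2.2 ≠ x := fun t ht =>
      ⟨ne_of_mem_of_not_mem (s := RedSet α) (Or.inr (H.reducible_of_mem ht).2) hx,
        ne_of_mem_of_not_mem (s := RedSet α) (Or.inl (H.reducible_of_mem ht).1) hx⟩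
    obtain ⟨y, hyC, -, hy⟩ := H.exists_isAttached t ht
    refine ⟨t.2.1, t.2.2, H.isChain.isAttached_of_inter_Ioo_eq (H.pair_mem t ht).1
      (H.pair_mem t ht).2 hI (fun w => H.exists_mem_le_lt fun t ht => (hend t ht).2)
      (fun w => H.exists_mem_le_gt fun t ht => (hend t ht).1),
      Or.inr (H.reducible_of_mem ht).2, Or.inl (H.reducible_of_mem ht).1, fun hIx => ?_, t, ht,
      rfl⟩
    exact ne_of_mem_of_not_mem hxC hyC (hIx.subset ⟨hy.lower_lt, hy.lt_upper⟩).symm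
  · obtain ⟨y, hyC, hyt, hy⟩ := H.exists_isAttached t ht
    obtain rfl : x = y := mem_singleton_iff.1 (hyt ▸ hxt)
    obtain ⟨z, hzC, hz⟩ := H.exists_mem_Ioo t ht
    exact ⟨t.2.1, t.2.2, hy, Or.inr (H.reducible_of_mem ht).2, Or.inl (H.reducible_of_mem ht).1,
      fun hIx => ne_of_mem_of_not_mem hzC hyC (hIx.subset hz), t, ht, rfl⟩

lemma isBasicBlock_and_nullity_eq [Finite α] [Nonempty α] (H : IsPointAdjunct C₀ l)
    (hm : C₀.ncard = (RedSet α).ncard + (irrAdjunctPairs l).ncard)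
    (hcard : Nat.card α = C₀.ncard + l.length) :
    IsBasicBlock α ∧ nullity α = l.length := by
  choose! A B hAB hA hB hI hpair using fun x (hx : x ∈ IrrSet α) =>
    H.exists_isAttached_of_mem_irrSet hm hx
  have hIA : IrrAttached A B := ⟨H.isChain.mono H.redSet_subset, hAB, hA, hB⟩
  have hgaps : gaps α = irrAdjunctPairs l := by
    ext p
    refine hIA.mem_gaps_iff.trans (and_congr_left fun _ => ⟨?_, ?_⟩)
    · rintro ⟨x, hx, rfl⟩
      exact hpair x hx
    · rintro ⟨t, ht, rfl⟩
      obtain ⟨x, -, -, hx⟩ := H.exists_isAttached t ht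
      obtain ⟨h₁, h₂⟩ := (hAB x hx.mem_irrSet).unique hx
      exact ⟨x, hx.mem_irrSet, Prod.ext h₁ h₂⟩
  have hsplit : (RedSet α).ncard + (IrrSet α).ncard = Nat.card α := ncard_add_ncard_compl _
  refine ⟨hIA.isBasicBlock_iff.2 hI, ?_⟩
  rw [hIA.nullity_eq, hgaps]
  omega

end IsPointAdjunct

section Construction

variable {α : Type*} [Lattice α] {A B : α → α} {rep : α × α → α}

lemma exists_irrAttached_of_isBasicBlock [Finite α]
    (hRC : ∀ x y : α, Reducible x → Reducible y → x ≤ y ∨ y ≤ x)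
    (hB : IsBasicBlock α) :
    ∃ A B : α → α, IrrAttached A B ∧ ∀ x ∈ IrrSet α, Ioo (A x) (B x) ≠ {x} := by
  obtain ⟨⟨T, hT, hTred⟩, ⟨Bo, hBo, hBored⟩⟩ := hB.1
  have : Nonempty α := ⟨T⟩
  have hex : ∀ x ∈ IrrSet α, ∃ a b, IsAttached a b x := fun x hx =>
    exists_isAttached hx (fun hmin => hx (hmin.eq_of_le (hBo x) ▸ Or.inr hBored))
      (fun hmax => hx (hmax.eq_of_ge (hT x) ▸ Or.inl hTred))
  choose! A B hAB using hex
  have hI : ∀ x ∈ IrrSet α, Ioo (A x) (B x) ≠ {x} := fun x hx =>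
    ((hAB x hx).nullity_compl_eq_sub_one_iff hT).1 ((hB.1.isBasicBlock_iff.1 hB) x hx)
  refine ⟨A, B, ⟨fun x hx y hy _ => hRC x y hx hy, hAB, fun x hx => ?_, fun x hx => ?_⟩, hI⟩
  -- an irreducible cover of `x` would leave `x` alone between its covers
  · by_contra hAx
    exact hI x hx ((hAB x hx).Ioo_eq_singleton_of_lower (hAB (A x) hAx))
  · by_contra hBx
    exact hI x hx ((hAB x hx).Ioo_eq_singleton_of_upper (hAB (B x) hBx))

lemma adjunctRep_map {C₀ : Set α} (hC₀ : IsChain (· ≤ ·) C₀) (hne : C₀.Nonempty) {L : List α}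
    (hL : L.Nodup)
    (hmem : ∀ x ∈ L, x ∉ C₀ ∧ A x ∈ C₀ ∧ B x ∈ C₀ ∧ (∃ z ∈ C₀, z ∈ Ioo (A x) (B x)) ∧
      IsAttached (A x) (B x) x) :
    AdjunctRep C₀ (C₀ ∪ {y | y ∈ L}) (L.map fun x => ({x}, A x, B x)) := by
  induction L using List.reverseRecOn with
  | nil => simpa using AdjunctRep.base hC₀ hne
  | append_singleton L x ih =>
    obtain ⟨hxL, hL'⟩ := (List.nodup_concat L x).1 (List.concat_eq_append ▸ hL)
    obtain ⟨hxC, hAC, hBC, ⟨z, hzC, hz⟩, hx⟩ := hmem x (by simp)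
    have hs : C₀ ∪ {y | y ∈ L ++ [x]} = (C₀ ∪ {y | y ∈ L}) ∪ {x} := by
      ext y
      simp only [mem_union, mem_ofPred_eq, List.mem_append, List.mem_singleton, mem_singleton_iff,
        or_assoc]
    have hxs : x ∉ C₀ ∪ {y | y ∈ L} := fun h => h.elim hxC hxL
    rw [hs, List.map_append, List.map_singleton]
    refine .step {x} (A x) (B x) (ih hL' fun y hy => hmem y (by simp [hy]))
      subsingleton_singleton.isChain (singleton_nonempty x) (disjoint_singleton_right.2 hxs)
      (Or.inl hAC) (Or.inl hBC) (hx.lower_lt.trans hx.lt_upper) ⟨z, Or.inl hzC, hz⟩ ?_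
    rintro w hw _ rfl
    exact hx.le_iff_of_ne (ne_of_mem_of_not_mem hw hxs)

lemma IrrAttached.exists_mem_Ioo_notMem_image (h : IrrAttached A B)
    (hI : ∀ x ∈ IrrSet α, Ioo (A x) (B x) ≠ {x}) (hrep : ∀ p ∈ gaps α, rep p ∈ Ioo p.1 p.2)
    {p : α × α} (hp : p ∈ gaps α) :
    ∃ y ∈ Ioo p.1 p.2, y ∉ rep '' gaps α := by
  have hne : Ioo p.1 p.2 ≠ {rep p} := by
    obtain ⟨h₁, h₂⟩ := Prod.ext_iff.1 (h.eq_of_mem_gaps hp (hrep p hp))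
    rw [← h₁, ← h₂]
    exact hI _ (mem_irrSet_of_mem_gaps hp (hrep p hp))
  obtain ⟨y, hy, hyp⟩ : ∃ y ∈ Ioo p.1 p.2, y ≠ rep p := by
    by_contra! hall
    exact hne (eq_singleton_iff_unique_mem.2 ⟨hrep p hp, hall⟩)
  refine ⟨y, hy, ?_⟩
  rintro ⟨q, hq, rfl⟩
  obtain rfl : q = p := by
    by_contra hqp
    exact disjoint_left.1 (disjoint_Ioo_of_mem_consPairs h.isChain hq.1 hp.1 hqp) (hrep q hq) hy
  exact hyp rfl

lemma IrrAttached.exists_mem_Ioo_of_mem_irrSet (h : IrrAttached A B)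
    (hrep : ∀ p ∈ gaps α, rep p ∈ Ioo p.1 p.2) {x : α} (hx : x ∈ IrrSet α) :
    ∃ z ∈ RedSet α ∪ rep '' gaps α, z ∈ Ioo (A x) (B x) := by
  by_cases hg : (A x, B x) ∈ gaps α
  · exact ⟨rep _, Or.inr ⟨_, hg, rfl⟩, hrep _ hg⟩
  · obtain ⟨z, hz, hzI⟩ :=
      not_subset.1 fun hsub => hg (h.mem_gaps_iff.2 ⟨⟨x, hx, rfl⟩, hsub⟩)
    exact ⟨z, Or.inl (not_not.1 hzI), hz⟩

/-- A representative is not alone in its gap, so every gap is the pair of an adjoined point. -/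
lemma IrrAttached.irrAdjunctPairs_map_eq (h : IrrAttached A B)
    (hI : ∀ x ∈ IrrSet α, Ioo (A x) (B x) ≠ {x}) (hrep : ∀ p ∈ gaps α, rep p ∈ Ioo p.1 p.2)
    {L : List α} (hL : ∀ x, x ∈ L ↔ x ∈ IrrSet α \ rep '' gaps α) :
    irrAdjunctPairs (L.map fun x => ({x}, A x, B x)) = gaps α := by
  ext p
  refine (and_congr_left fun _ => ⟨?_, ?_⟩).trans h.mem_gaps_iff.symm
  · rintro ⟨_, ht, rfl⟩
    obtain ⟨x, hx, rfl⟩ := List.mem_map.1 ht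
    exact ⟨x, ((hL x).1 hx).1, rfl⟩
  · rintro ⟨x, hx, rfl⟩
    by_cases hxR : x ∈ rep '' gaps α
    · obtain ⟨q, hq, rfl⟩ := hxR
      obtain ⟨y, hy, hyR⟩ := h.exists_mem_Ioo_notMem_image hI hrep hq
      have hyL : y ∈ L := (hL y).2 ⟨mem_irrSet_of_mem_gaps hq hy, hyR⟩
      refine ⟨({y}, A y, B y), List.mem_map.2 ⟨y, hyL, rfl⟩, ?_⟩
      rw [h.eq_of_mem_gaps hq (hrep q hq)]
      exact h.eq_of_mem_gaps hq hy
    · exact ⟨({x}, A x, B x), List.mem_map.2 ⟨x, (hL x).2 ⟨hx, hxR⟩, rfl⟩, rfl⟩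

lemma IrrAttached.exists_adjunctRep [Finite α] [Nonempty α] (h : IrrAttached A B)
    (hI : ∀ x ∈ IrrSet α, Ioo (A x) (B x) ≠ {x}) :
    ∃ (C₀ : Set α) (l : List (Set α × α × α)), AdjunctRep C₀ univ l ∧
      (∀ t ∈ l, t.2.1 ∈ C₀ ∧ t.2.2 ∈ C₀) ∧ (∀ t ∈ l, t.1.ncard = 1) ∧
      irrAdjunctPairs l = gaps α ∧ C₀.ncard = (RedSet α).ncard + (gaps α).ncard := by
  choose! rep hrep using fun p (hp : p ∈ gaps α) => hp.2
  have hP : gaps α ⊆ consPairs (RedSet α) := fun p hp => hp.1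
  set R := rep '' gaps α
  have hRI : R ⊆ IrrSet α := by
    rintro _ ⟨p, hp, rfl⟩
    exact mem_irrSet_of_mem_gaps hp (hrep p hp)
  set L := (toFinite (IrrSet α \ R)).toFinset.toList
  have hL : ∀ x, x ∈ L ↔ x ∈ IrrSet α \ R := fun x => by
    rw [Finset.mem_toList, Finite.mem_toFinset]
  have hmem : ∀ x ∈ L, x ∉ RedSet α ∪ R ∧ A x ∈ RedSet α ∪ R ∧ B x ∈ RedSet α ∪ R ∧
      (∃ z ∈ RedSet α ∪ R, z ∈ Ioo (A x) (B x)) ∧ IsAttached (A x) (B x) x := fun x hx =>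
    have hx' := (hL x).1 hx
    ⟨fun h' => h'.elim hx'.1 hx'.2, Or.inl (h.lower_mem x hx'.1), Or.inl (h.upper_mem x hx'.1),
      h.exists_mem_Ioo_of_mem_irrSet hrep hx'.1, h.isAttached x hx'.1⟩
  have huniv : RedSet α ∪ R ∪ {y | y ∈ L} = univ := by
    refine eq_univ_of_forall fun y => ?_
    by_cases hy : y ∈ RedSet α
    · exact Or.inl (Or.inl hy)
    by_cases hyR : y ∈ R
    exacts [Or.inl (Or.inr hyR), Or.inr ((hL y).2 ⟨hy, hyR⟩)]
  have hdisj : Disjoint (RedSet α) R := disjoint_left.2 fun x hx hxR => hRI hxR hx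
  refine ⟨RedSet α ∪ R, L.map fun x => ({x}, A x, B x),
    huniv ▸ adjunctRep_map (h.isChain.union_image_of_mem_Ioo hP hrep)
      (h.redSet_nonempty.mono subset_union_left) (Finset.nodup_toList _) hmem, ?_, ?_,
    h.irrAdjunctPairs_map_eq hI hrep hL, ?_⟩
  · intro t ht
    obtain ⟨x, hx, rfl⟩ := List.mem_map.1 ht
    exact ⟨(hmem x hx).2.1, (hmem x hx).2.2.1⟩
  · intro t ht
    obtain ⟨x, -, rfl⟩ := List.mem_map.1 ht
    exact ncard_singleton x
  · rw [ncard_union_eq hdisj, (injOn_of_mem_Ioo h.isChain hP hrep).ncard_image]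

end Construction

theorem stmt7_general {α : Type*} [Lattice α] [Fintype α] (n k : ℕ)
    (hn : Nat.card α = n)
    (hRC : ∀ x y : α, Reducible x → Reducible y → x ≤ y ∨ y ≤ x) :
    (IsBasicBlock α ∧ nullity α = (k : ℤ)) ↔
      ∃ (C₀ : Set α) (l : List (Set α × α × α)),
        AdjunctRep C₀ Set.univ l ∧ l.length = k ∧
        (∀ t ∈ l, t.2.1 ∈ C₀ ∧ t.2.2 ∈ C₀) ∧
        (∀ t ∈ l, t.1.ncard = 1) ∧
        ∃ m : ℕ,
          m = {p : α × α | (∃ t ∈ l, t.2 = p) ∧ Set.Ioo p.1 p.2 ⊆ IrrSet α}.ncard ∧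
          n = C₀.ncard + k ∧
          (IrrSet α).ncard = k + m ∧
          C₀.ncard = (RedSet α).ncard + m ∧
          n = (RedSet α).ncard + m + k := by
  have hsplit : (RedSet α).ncard + (IrrSet α).ncard = Nat.card α := ncard_add_ncard_compl _
  constructor
  · rintro ⟨hB, hk⟩
    have : Nonempty α := ⟨hB.1.1.choose⟩
    obtain ⟨A, B, h, hI⟩ := exists_irrAttached_of_isBasicBlock hRC hB
    obtain ⟨C₀, l, hrep, hpairs, hone, hgaps, hC₀⟩ := h.exists_adjunctRep hI
    have hcard := hrep.ncard_eq hone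
    have hnull := h.nullity_eq
    rw [ncard_univ] at hcard
    refine ⟨C₀, l, hrep, ?_, hpairs, hone, (gaps α).ncard, by rw [← hgaps]; rfl, ?_, ?_, hC₀,
      ?_⟩ <;> omega
  · rintro ⟨C₀, l, hrep, rfl, hpairs, hone, m, rfl, -, -, hC₀, -⟩
    have : Nonempty α := ⟨hrep.nonempty.some⟩
    have hcard := hrep.ncard_eq hone
    rw [ncard_univ] at hcard
    exact (hrep.isPointAdjunct hpairs hone).isBasicBlock_and_nullity_eq hC₀ hcard

/-- Characterization of basic blocks among RC-lattices: an RC-lattice `B` on `n`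
elements is a basic block of nullity `k` iff it has an adjunct representation
`B = C₀ ]^{b₁}_{a₁} C₁ ⋯ ]^{b_k}_{a_k} C_k` into chains with all adjunct pairs in `C₀`,
satisfying (i) `|Cᵢ| = 1` for `1 ≤ i ≤ k`, (ii) `n = |C₀| + k`, (iii) `|Irr(B)| = k + m`
where `m` is the number of distinct adjunct pairs `(a,b)` whose open interval `(a,b)`
is contained in `Irr(B)`, and (iv) `|C₀| = |Red(B)| + m`; and then `n = |Red(B)| + m + k`. -/
theorem stmt7 {α : Type*} [Lattice α] [Fintype α] [Nonempty α] (n k : ℕ)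
    (hn : Nat.card α = n)
    (hRC : ∀ x y : α, Reducible x → Reducible y → x ≤ y ∨ y ≤ x) :
    (IsBasicBlock α ∧ nullity α = (k : ℤ)) ↔
      ∃ (C₀ : Set α) (l : List (Set α × α × α)),
        AdjunctRep C₀ Set.univ l ∧ l.length = k ∧
        (∀ t ∈ l, t.2.1 ∈ C₀ ∧ t.2.2 ∈ C₀) ∧
        (∀ t ∈ l, t.1.ncard = 1) ∧
        ∃ m : ℕ,
          m = {p : α × α | (∃ t ∈ l, t.2 = p) ∧ Set.Ioo p.1 p.2 ⊆ IrrSet α}.ncard ∧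
          n = C₀.ncard + k ∧
          (IrrSet α).ncard = k + m ∧
          C₀.ncard = (RedSet α).ncard + m ∧
          n = (RedSet α).ncard + m + k :=
  stmt7_general n k hn hRC
end
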